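/- arXiv:math/0408151 — 10 statements merged into one kernel-verified Lean document; each statement's English description precedes it below -/
import Mathlib

section
/- If there exists a nonnegative measurable function Δ on X satisfying ∑_{y : r(y)=x} Δ(y) = 1 for μ₀-a.e. x and ∫ V·f dμ₀ = ∫ (∑_{y : r(y)=x} Δ(y) f(y)) dμ₀(x) for all bounded measurable f, then μ₀ has the fixed-point property: ∫ V·(f ∘ r) dμ₀ = ∫ f dμ₀ for all bounded measurable f. -/
open MeasureTheory

/-- If a nonnegative measurable Δ satisfies ∑_{r(y)=x} Δ(y) = 1 μ₀-a.e. and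
∫ V·f dμ₀ = ∫ ∑_{r(y)=x} Δ(y) f(y) dμ₀(x) for all bounded measurable f, then μ₀ has the
fixed-point property. -/
theorem stmt0 {X : Type*} [MeasurableSpace X] (r : X → X) (hr : Measurable r)
    (hsurj : Function.Surjective r) (hfin : ∀ x, (r ⁻¹' {x}).Finite)
    (V : X → ℝ) (hVm : Measurable V) (hVpos : ∀ x, 0 ≤ V x) (hVbdd : ∃ C, ∀ x, V x ≤ C)
    (μ₀ : Measure X) [IsFiniteMeasure μ₀]
    (Δ : X → ℝ) (hΔm : Measurable Δ) (hΔpos : ∀ x, 0 ≤ Δ x)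
    (hΔ1 : ∀ᵐ x ∂μ₀, ∑ᶠ y ∈ r ⁻¹' {x}, Δ y = 1)
    (hΔint : ∀ f : X → ℝ, Measurable f → (∃ C, ∀ x, |f x| ≤ C) →
      ∫ x, V x * f x ∂μ₀ = ∫ x, ∑ᶠ y ∈ r ⁻¹' {x}, Δ y * f y ∂μ₀) :
    ∀ f : X → ℝ, Measurable f → (∃ C, ∀ x, |f x| ≤ C) →
      ∫ x, V x * f (r x) ∂μ₀ = ∫ x, f x ∂μ₀ := by
  intro f hf ⟨C, hC⟩
  have key := hΔint (fun y => f (r y)) (hf.comp hr) ⟨C, fun x => hC (r x)⟩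
  rw [key]
  refine integral_congr_ae ?_
  filter_upwards [hΔ1] with x hx
  have h1 : ∑ᶠ y ∈ r ⁻¹' {x}, Δ y * f (r y) = ∑ᶠ y ∈ r ⁻¹' {x}, Δ y * f x := by
    refine finsum_mem_congr rfl fun y hy => ?_
    rw [Set.mem_preimage, Set.mem_singleton_iff] at hy
    rw [hy]
  have h2 : ∑ᶠ y ∈ r ⁻¹' {x}, Δ y * f x = (∑ᶠ y ∈ r ⁻¹' {x}, Δ y) * f x := by
    rw [← Set.Finite.coe_toFinset (hfin x), finsum_mem_coe_finset, finsum_mem_coe_finset,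
      Finset.sum_mul]
  rw [h1, h2, hx, one_mul]
end

section
/- If μ₀ has the fixed-point property ∫ V·(f ∘ r) dμ₀ = ∫ f dμ₀ for all f ∈ L^∞(X, μ₀), then for each f ∈ L¹(X, μ₀) there exists a function R_{μ₀}(V f) ∈ L¹(X, μ₀) such that ∫ V·f·(g ∘ r) dμ₀ = ∫ R_{μ₀}(V f)·g dμ₀ for all g ∈ L^∞(X, μ₀). -/
/-!
Since `V ≥ 0`, the fixed-point property tested on indicators says that the pushforward of
`V μ₀` under `r` is `μ₀` itself. For measurable `φ ≥ 0`, the measure `V φ μ₀` is absolutely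
continuous with respect to `V μ₀`, so its pushforward under `r` is absolutely continuous with
respect to `μ₀`; the Radon–Nikodym derivative is the required density. A general `f` is split
into positive and negative parts.
-/

open MeasureTheory

section TransferDensity

variable {X : Type*} [MeasurableSpace X] {μ : Measure X} {r : X → X}

/-- `ρ` is the paper's `R_μ(h)`, characterised by duality against bounded measurable `g`. -/
def IsTransferDensity (r : X → X) (μ : Measure X) (h ρ : X → ℝ) : Prop :=
  ∀ g : X → ℝ, Measurable g → (∃ C, ∀ x, |g x| ≤ C) →
    ∫ x, h x * g (r x) ∂μ = ∫ x, ρ x * g x ∂μ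

lemma MeasureTheory.Integrable.mul_of_abs_le {f g : X → ℝ} (hf : Integrable f μ)
    (hg : AEStronglyMeasurable g μ) (hgC : ∃ C, ∀ x, |g x| ≤ C) :
    Integrable (fun x => f x * g x) μ :=
  let ⟨_, hC⟩ := hgC
  hf.mul_bdd hg (ae_of_all _ fun x => (Real.norm_eq_abs _).trans_le (hC x))

lemma IsTransferDensity.sub (hr : Measurable r) {h₁ h₂ ρ₁ ρ₂ : X → ℝ}
    (hh₁ : Integrable h₁ μ) (hh₂ : Integrable h₂ μ) (hρ₁ : Integrable ρ₁ μ)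
    (hρ₂ : Integrable ρ₂ μ) (H₁ : IsTransferDensity r μ h₁ ρ₁)
    (H₂ : IsTransferDensity r μ h₂ ρ₂) :
    IsTransferDensity r μ (h₁ - h₂) (ρ₁ - ρ₂) := by
  intro g hg hgC
  have hgr : ∃ C, ∀ x, |g (r x)| ≤ C := let ⟨C, hC⟩ := hgC; ⟨C, fun x => hC (r x)⟩
  have hgrm : AEStronglyMeasurable (fun x => g (r x)) μ := (hg.comp hr).aestronglyMeasurable
  simp only [Pi.sub_apply, sub_mul]
  rw [integral_sub (hh₁.mul_of_abs_le hgrm hgr) (hh₂.mul_of_abs_le hgrm hgr),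
    integral_sub (hρ₁.mul_of_abs_le hg.aestronglyMeasurable hgC)
      (hρ₂.mul_of_abs_le hg.aestronglyMeasurable hgC), H₁ g hg hgC, H₂ g hg hgC]

lemma exists_isTransferDensity_of_absolutelyContinuous [SigmaFinite μ] (hr : Measurable r)
    {h : X → ℝ} (hhm : Measurable h) (hh0 : ∀ x, 0 ≤ h x) (hhi : Integrable h μ)
    (hac : (μ.withDensity fun x => ENNReal.ofReal (h x)).map r ≪ μ) :
    ∃ ρ, Integrable ρ μ ∧ IsTransferDensity r μ h ρ := by
  set ν := μ.withDensity fun x => ENNReal.ofReal (h x)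
  have : IsFiniteMeasure ν := isFiniteMeasure_withDensity_ofReal hhi.2
  refine ⟨fun x => ((ν.map r).rnDeriv μ x).toReal, Measure.integrable_toReal_rnDeriv,
    fun g hg _ => ?_⟩
  calc ∫ x, h x * g (r x) ∂μ = ∫ x, g (r x) ∂ν := by
        rw [integral_withDensity_eq_integral_toReal_smul (by fun_prop)
          (ae_of_all _ fun _ => ENNReal.ofReal_lt_top)]
        simp only [ENNReal.toReal_ofReal (hh0 _), smul_eq_mul]
    _ = ∫ x, g x ∂ν.map r := (integral_map hr.aemeasurable hg.aestronglyMeasurable).symm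
    _ = ∫ x, ((ν.map r).rnDeriv μ x).toReal * g x ∂μ := (integral_rnDeriv_smul hac).symm

variable {V : X → ℝ}

lemma map_withDensity_eq_self_of_integral_mul_comp_eq [IsFiniteMeasure μ] (hr : Measurable r)
    (hVm : Measurable V) (hV0 : ∀ x, 0 ≤ V x) (hVbdd : ∃ C, ∀ x, V x ≤ C)
    (hfp : ∀ f : X → ℝ, Measurable f → (∃ C, ∀ x, |f x| ≤ C) →
      ∫ x, V x * f (r x) ∂μ = ∫ x, f x ∂μ) :
    (μ.withDensity fun x => ENNReal.ofReal (V x)).map r = μ := by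
  ext E hE
  obtain ⟨C, hC⟩ := hVbdd
  have hVi : Integrable V μ :=
    Integrable.of_bound hVm.aestronglyMeasurable C
      (ae_of_all _ fun x => by rw [Real.norm_of_nonneg (hV0 x)]; exact hC x)
  have hind : (fun x => V x * E.indicator 1 (r x)) = (r ⁻¹' E).indicator V := by
    ext x; by_cases hx : r x ∈ E <;> simp [hx]
  have hE_int := hfp (E.indicator 1) (measurable_one.indicator hE)
    ⟨1, fun x => by by_cases hx : x ∈ E <;> simp [hx]⟩
  rw [hind, integral_indicator (hr hE), integral_indicator_one hE] at hE_int
  rw [Measure.map_apply hr hE, withDensity_apply _ (hr hE), ← ofReal_measureReal, ← hE_int,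
    ofReal_integral_eq_lintegral_ofReal hVi.integrableOn (ae_of_all _ hV0)]

lemma map_withDensity_mul_absolutelyContinuous (hr : Measurable r) (hVm : Measurable V)
    (hV0 : ∀ x, 0 ≤ V x) (hmap : (μ.withDensity fun x => ENNReal.ofReal (V x)).map r = μ)
    {φ : X → ℝ} (hφm : Measurable φ) :
    (μ.withDensity fun x => ENNReal.ofReal (V x * φ x)).map r ≪ μ := by
  have hfactor : (μ.withDensity fun x => ENNReal.ofReal (V x * φ x))
      = (μ.withDensity fun x => ENNReal.ofReal (V x)).withDensity
          fun x => ENNReal.ofReal (φ x) := by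
    simp only [ENNReal.ofReal_mul (hV0 _)]
    exact withDensity_mul μ (by fun_prop) (by fun_prop)
  rw [hfactor]
  nth_rewrite 2 [← hmap]
  exact (withDensity_absolutelyContinuous _ _).map hr

lemma exists_isTransferDensity_mul [IsFiniteMeasure μ] (hr : Measurable r) (hVm : Measurable V)
    (hV0 : ∀ x, 0 ≤ V x) (hmap : (μ.withDensity fun x => ENNReal.ofReal (V x)).map r = μ)
    {f : X → ℝ} (hfm : Measurable f) (hVf : Integrable (fun x => V x * f x) μ) :
    ∃ ρ, Integrable ρ μ ∧ IsTransferDensity r μ (fun x => V x * f x) ρ := by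
  have hpart : ∀ φ : X → ℝ, Measurable φ → (∀ x, 0 ≤ φ x) → Integrable (fun x => V x * φ x) μ →
      ∃ ρ, Integrable ρ μ ∧ IsTransferDensity r μ (fun x => V x * φ x) ρ :=
    fun φ hφm hφ0 hVφ => exists_isTransferDensity_of_absolutelyContinuous hr (hVm.mul hφm)
      (fun x => mul_nonneg (hV0 x) (hφ0 x)) hVφ
      (map_withDensity_mul_absolutelyContinuous hr hVm hV0 hmap hφm)
  have hmul_max : ∀ x (t : ℝ), V x * max t 0 = max (V x * t) 0 := fun x t => by
    rw [mul_max_of_nonneg _ _ (hV0 x), mul_zero]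
  have hpos : Integrable (fun x => V x * max (f x) 0) μ := by
    simpa only [hmul_max] using hVf.pos_part
  have hneg : Integrable (fun x => V x * max (-f x) 0) μ := by
    simpa only [hmul_max, mul_neg, Pi.neg_apply] using hVf.neg.pos_part
  obtain ⟨ρ₁, hρ₁, H₁⟩ := hpart _ (hfm.max measurable_const) (fun _ => le_max_right _ _) hpos
  obtain ⟨ρ₂, hρ₂, H₂⟩ := hpart _ (hfm.neg.max measurable_const) (fun _ => le_max_right _ _) hneg
  have hsplit : (fun x => V x * f x)
      = (fun x => V x * max (f x) 0) - fun x => V x * max (-f x) 0 := by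
    ext x; rw [Pi.sub_apply, ← mul_sub, max_zero_sub_max_neg_zero_eq_self]
  exact ⟨ρ₁ - ρ₂, hρ₁.sub hρ₂, hsplit ▸ H₁.sub hr hpos hneg hρ₁ hρ₂ H₂⟩

end TransferDensity

theorem stmt1_general {X : Type*} [MeasurableSpace X] (r : X → X) (hr : Measurable r)
    (V : X → ℝ) (hVm : Measurable V) (hVpos : ∀ x, 0 ≤ V x) (hVbdd : ∃ C, ∀ x, V x ≤ C)
    (μ₀ : Measure X) [IsFiniteMeasure μ₀]
    (hfp : ∀ f : X → ℝ, Measurable f → (∃ C, ∀ x, |f x| ≤ C) →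
      ∫ x, V x * f (r x) ∂μ₀ = ∫ x, f x ∂μ₀) :
    ∀ f : X → ℝ, Integrable f μ₀ →
      ∃ ρ : X → ℝ, Integrable ρ μ₀ ∧
        ∀ g : X → ℝ, Measurable g → (∃ C, ∀ x, |g x| ≤ C) →
          ∫ x, V x * f x * g (r x) ∂μ₀ = ∫ x, ρ x * g x ∂μ₀ := by
  intro f hf
  have hmap := map_withDensity_eq_self_of_integral_mul_comp_eq hr hVm hVpos hVbdd hfp
  obtain ⟨C, hC⟩ := hVbdd
  have hff' : f =ᵐ[μ₀] hf.1.mk f := hf.1.ae_eq_mk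
  have hVf' : Integrable (fun x => V x * hf.1.mk f x) μ₀ :=
    (hf.congr hff').bdd_mul hVm.aestronglyMeasurable
      (ae_of_all _ fun x => by rw [Real.norm_of_nonneg (hVpos x)]; exact hC x)
  obtain ⟨ρ, hρ, H⟩ :=
    exists_isTransferDensity_mul hr hVm hVpos hmap hf.1.stronglyMeasurable_mk.measurable hVf'
  refine ⟨ρ, hρ, fun g hg hgC => ?_⟩
  rw [← H g hg hgC]
  exact integral_congr_ae (by filter_upwards [hff'] with x hx; rw [hx])

/-- If μ₀ has the fixed-point property, then for each f ∈ L¹(X,μ₀) there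
exists R_{μ₀}(V f) ∈ L¹(X,μ₀) with ∫ V·f·(g∘r) dμ₀ = ∫ R_{μ₀}(V f)·g dμ₀ for all
g ∈ L^∞(X,μ₀). -/
theorem stmt1 {X : Type*} [MeasurableSpace X] (r : X → X) (hr : Measurable r)
    (hsurj : Function.Surjective r) (hfin : ∀ x, (r ⁻¹' {x}).Finite)
    (V : X → ℝ) (hVm : Measurable V) (hVpos : ∀ x, 0 ≤ V x) (hVbdd : ∃ C, ∀ x, V x ≤ C)
    (μ₀ : Measure X) [IsFiniteMeasure μ₀]
    (hfp : ∀ f : X → ℝ, Measurable f → (∃ C, ∀ x, |f x| ≤ C) →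
      ∫ x, V x * f (r x) ∂μ₀ = ∫ x, f x ∂μ₀) :
    ∀ f : X → ℝ, Integrable f μ₀ →
      ∃ ρ : X → ℝ, Integrable ρ μ₀ ∧
        ∀ g : X → ℝ, Measurable g → (∃ C, ∀ x, |g x| ≤ C) →
          ∫ x, V x * f x * g (r x) ∂μ₀ = ∫ x, ρ x * g x ∂μ₀ :=
  stmt1_general r hr V hVm hVpos hVbdd μ₀ hfp
end

section
/- Suppose μ₀ has the fixed-point property with respect to V and r, and the branches of r⁻¹ can be labeled measurably. Then there exists a nonnegative measurable function Δ on X such that for every f ∈ L¹(X, μ₀), (R_{μ₀}(V f))(x) = ∑_{y : r(y)=x} Δ(y) f(y) for μ₀-a.e. x. -/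
/-!
Write `ν = V μ₀`; the fixed-point property says exactly that `r_* ν = μ₀`. On each sheet
`τ_i(A_i)` the map `r` is injective with inverse `τ_i`, and the sheets partition `X`. Hence the
push-forward of `ν` restricted to the `i`-th sheet is dominated by `μ₀`; let `D_i` be its density
and put `Δ := D_i ∘ r` on the `i`-th sheet. Changing variables sheet by sheet gives, for
`f ∈ L¹(μ₀)` and measurable `E`,
  `∫_{r⁻¹E} f dν = ∑_i ∫_E D_i · (f ∘ τ_i) dμ₀ = ∫_E ∑_{r y = x} Δ(y) f(y) dμ₀(x)`,
where the exchange of sum and integral is justified by `∑_i ∫ D_i |f ∘ τ_i| dμ₀ ≤ ∫ |f| dν`.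
The left side is `∫_E R_{μ₀}(V f) dμ₀`, so the two functions agree a.e. The fibre sums are
insensitive to changing `f` on a `ν`-null set `N`: they move only where some `D_i` is nonzero on
`τ_i⁻¹(N)`, a `μ₀`-null set. So `f` may be replaced by a measurable representative.
-/

open MeasureTheory Set
open scoped ENNReal

lemma Measurable.indicator_comp_of_domRestrict {X Y β : Type*} [MeasurableSpace X]
    [MeasurableSpace Y] [MeasurableSpace β] [Zero β] {A : Set X} (hA : MeasurableSet A)
    {τ : X → Y} (hτ : Measurable (A.domRestrict τ)) {φ : Y → β} (hφ : Measurable φ) :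
    Measurable (A.indicator (φ ∘ τ)) := by
  refine measurable_of_restrict_of_restrict_compl hA ?_ ?_
  · convert hφ.comp hτ using 1
    ext ⟨x, hx⟩
    exact indicator_of_mem hx _
  · convert measurable_const (a := (0 : β)) using 1
    ext ⟨x, hx⟩
    exact indicator_of_notMem hx _

lemma integrable_tsum_of_measurable {X E ι : Type*} [MeasurableSpace X] {μ : Measure X}
    [Countable ι] [NormedAddCommGroup E] [CompleteSpace E] [SecondCountableTopology E]
    [MeasurableSpace E] [BorelSpace E] {F : ι → X → E} (hF : ∀ i, Measurable (F i))
    (hsum : ∑' i, ∫⁻ x, ‖F i x‖ₑ ∂μ < ∞) : Integrable (fun x => ∑' i, F i x) μ := by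
  refine ⟨(Measurable.tsum hF).aestronglyMeasurable, ?_⟩
  calc ∫⁻ x, ‖∑' i, F i x‖ₑ ∂μ ≤ ∫⁻ x, ∑' i, ‖F i x‖ₑ ∂μ :=
        lintegral_mono fun x => enorm_tsum_le_tsum_enorm
    _ = ∑' i, ∫⁻ x, ‖F i x‖ₑ ∂μ := lintegral_tsum fun i => (hF i).enorm.aemeasurable
    _ < ∞ := hsum

lemma integral_mul_indicator_one {X : Type*} [MeasurableSpace X] {μ : Measure X} (ρ : X → ℝ)
    {E : Set X} (hE : MeasurableSet E) : ∫ x, ρ x * E.indicator 1 x ∂μ = ∫ x in E, ρ x ∂μ := by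
  rw [← integral_indicator hE]
  congr with x
  by_cases hx : x ∈ E <;> simp [hx]

structure MeasurableBranches {X Y : Type*} [MeasurableSpace X] [MeasurableSpace Y]
    (r : X → Y) (ι : Type*) where
  dom : ι → Set Y
  inv : ι → Y → X
  measurableSet_dom : ∀ i, MeasurableSet (dom i)
  measurable_inv : ∀ i, Measurable ((dom i).domRestrict (inv i))
  measurableSet_image : ∀ i, MeasurableSet (inv i '' dom i)
  apply_inv : ∀ i, ∀ x ∈ dom i, r (inv i x) = x
  exists_inv_apply : ∀ y, ∃ i, r y ∈ dom i ∧ inv i (r y) = y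
  injOn : ∀ x, InjOn (fun i => inv i x) {i | x ∈ dom i}
  finite_setOf_mem_dom : ∀ x, {i | x ∈ dom i}.Finite

namespace MeasurableBranches

variable {X Y ι : Type*} [MeasurableSpace X] [MeasurableSpace Y] {r : X → Y}
  (b : MeasurableBranches r ι)

def sheet (i : ι) : Set X := b.inv i '' b.dom i

lemma measurableSet_sheet (i : ι) : MeasurableSet (b.sheet i) := b.measurableSet_image i

lemma inv_apply_of_mem_sheet {i : ι} {y : X} (hy : y ∈ b.sheet i) :
    r y ∈ b.dom i ∧ b.inv i (r y) = y := by
  obtain ⟨x, hx, rfl⟩ := hy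
  rw [b.apply_inv i x hx]
  exact ⟨hx, rfl⟩

lemma indicator_comp_inv_apply_of_mem_sheet {β : Type*} [Zero β] (φ : X → β) {i : ι} {y : X}
    (hy : y ∈ b.sheet i) : (b.dom i).indicator (φ ∘ b.inv i) (r y) = φ y := by
  obtain ⟨hdom, hinv⟩ := b.inv_apply_of_mem_sheet hy
  rw [indicator_of_mem hdom, Function.comp_apply, hinv]

lemma pairwise_disjoint_sheet : Pairwise (Function.onFun Disjoint b.sheet) := by
  intro i j hij
  refine disjoint_left.2 fun y hi hj => hij ?_
  obtain ⟨hi_dom, hi_inv⟩ := b.inv_apply_of_mem_sheet hi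
  obtain ⟨hj_dom, hj_inv⟩ := b.inv_apply_of_mem_sheet hj
  exact b.injOn (r y) hi_dom hj_dom (hi_inv.trans hj_inv.symm)

lemma iUnion_sheet : ⋃ i, b.sheet i = univ := by
  refine eq_univ_of_forall fun y => ?_
  obtain ⟨i, hi, hy⟩ := b.exists_inv_apply y
  exact mem_iUnion.2 ⟨i, r y, hi, hy⟩

lemma preimage_singleton (x : Y) : r ⁻¹' {x} = (fun i => b.inv i x) '' {i | x ∈ b.dom i} := by
  ext y
  constructor
  · rintro rfl
    obtain ⟨i, hi, hy⟩ := b.exists_inv_apply y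
    exact ⟨i, hi, hy⟩
  · rintro ⟨i, hi, rfl⟩
    exact b.apply_inv i x hi

lemma finsum_mem_preimage_singleton {M : Type*} [AddCommMonoid M] [TopologicalSpace M]
    (F : X → M) (x : Y) :
    ∑ᶠ y ∈ r ⁻¹' {x}, F y = ∑' i, (b.dom i).indicator (F ∘ b.inv i) x := by
  rw [b.preimage_singleton, finsum_mem_image (b.injOn x), finsum_mem_def,
    tsum_eq_finsum ((b.finite_setOf_mem_dom x).subset _)]
  · refine finsum_congr fun i => ?_
    by_cases hi : x ∈ b.dom i <;> simp [hi]
  · exact fun i hi => by_contra fun hx => hi (indicator_of_notMem (s := b.dom i) hx _)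

lemma measurable_indicator_comp_inv {β : Type*} [MeasurableSpace β] [Zero β] {φ : X → β}
    (hφ : Measurable φ) (i : ι) : Measurable ((b.dom i).indicator (φ ∘ b.inv i)) :=
  Measurable.indicator_comp_of_domRestrict (b.measurableSet_dom i) (b.measurable_inv i) hφ

variable (ν : Measure X) (μ : Measure Y)

/-- For `ν = V μ` this is the paper's `R_μ(V χ_{τ_i(A_i)})`. -/
noncomputable def density (i : ι) : Y → ℝ≥0∞ := ((ν.restrict (b.sheet i)).map r).rnDeriv μ

noncomputable def weight (y : X) : ℝ :=
  (∑' i, (b.sheet i).indicator (fun z => b.density ν μ i (r z)) y).toReal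

noncomputable def transfer (f : X → ℝ) (x : Y) : ℝ := ∑ᶠ y ∈ r ⁻¹' {x}, b.weight ν μ y * f y

lemma measurable_density (i : ι) : Measurable (b.density ν μ i) := Measure.measurable_rnDeriv _ _

lemma measurable_density_mul_indicator_comp_inv {f : X → ℝ} (hf : Measurable f) (i : ι) :
    Measurable fun x => (b.density ν μ i x).toReal * (b.dom i).indicator (f ∘ b.inv i) x :=
  (b.measurable_density ν μ i).ennreal_toReal.mul (b.measurable_indicator_comp_inv hf i)

variable {b ν μ}

lemma weight_inv_apply {i : ι} {x : Y} (hx : x ∈ b.dom i) :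
    b.weight ν μ (b.inv i x) = (b.density ν μ i x).toReal := by
  have hy : b.inv i x ∈ b.sheet i := ⟨x, hx, rfl⟩
  rw [weight, tsum_eq_single i fun j hji => indicator_of_notMem
    (disjoint_right.1 (b.pairwise_disjoint_sheet hji) hy) _, indicator_of_mem hy,
    b.apply_inv i x hx]

lemma measurable_weight [Countable ι] (hr : Measurable r) : Measurable (b.weight ν μ) :=
  (Measurable.tsum fun i =>
    ((b.measurable_density ν μ i).comp hr).indicator (b.measurableSet_sheet i)).ennreal_toReal

lemma transfer_eq_tsum (f : X → ℝ) :
    b.transfer ν μ f =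
      fun x => ∑' i, (b.density ν μ i x).toReal * (b.dom i).indicator (f ∘ b.inv i) x := by
  ext x
  rw [transfer, b.finsum_mem_preimage_singleton]
  refine tsum_congr fun i => ?_
  by_cases hx : x ∈ b.dom i
  · simp [hx, weight_inv_apply hx]
  · simp [hx]

lemma transfer_indicator_preimage (f : X → ℝ) (E : Set Y) :
    b.transfer ν μ ((r ⁻¹' E).indicator f) = E.indicator (b.transfer ν μ f) := by
  ext x
  by_cases hx : x ∈ E
  · rw [indicator_of_mem hx]
    refine finsum_mem_congr rfl fun y (hy : r y = x) => ?_
    have hyE : r y ∈ E := hy ▸ hx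
    rw [indicator_of_mem (s := r ⁻¹' E) hyE]
  · rw [indicator_of_notMem hx, transfer]
    refine finsum_mem_eq_zero_of_forall_eq_zero fun y (hy : r y = x) => ?_
    have hyE : r y ∉ E := hy ▸ hx
    rw [indicator_of_notMem (s := r ⁻¹' E) hyE, mul_zero]

lemma map_restrict_sheet_absolutelyContinuous (hr : Measurable r) (hac : ν.map r ≪ μ) (i : ι) :
    (ν.restrict (b.sheet i)).map r ≪ μ :=
  (Measure.absolutelyContinuous_of_le (Measure.map_mono Measure.restrict_le_self hr)).trans hac

variable (hr : Measurable r) [IsFiniteMeasure ν] [SigmaFinite μ] (hac : ν.map r ≪ μ)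
include hr hac

lemma lintegral_density_mul {φ : X → ℝ≥0∞} (hφ : Measurable φ) (i : ι) :
    ∫⁻ x, b.density ν μ i x * (b.dom i).indicator (φ ∘ b.inv i) x ∂μ =
      ∫⁻ y in b.sheet i, φ y ∂ν := by
  rw [density, lintegral_rnDeriv_mul (map_restrict_sheet_absolutelyContinuous hr hac i)
    (b.measurable_indicator_comp_inv hφ i).aemeasurable,
    lintegral_map (b.measurable_indicator_comp_inv hφ i) hr]
  exact setLIntegral_congr_fun (b.measurableSet_sheet i) fun y hy =>
    b.indicator_comp_inv_apply_of_mem_sheet φ hy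

lemma integral_density_mul {φ : X → ℝ} (hφ : Measurable φ) (i : ι) :
    ∫ x, (b.density ν μ i x).toReal * (b.dom i).indicator (φ ∘ b.inv i) x ∂μ =
      ∫ y in b.sheet i, φ y ∂ν := by
  rw [density, integral_toReal_rnDeriv_mul (map_restrict_sheet_absolutelyContinuous hr hac i),
    integral_map hr.aemeasurable (b.measurable_indicator_comp_inv hφ i).aestronglyMeasurable]
  exact setIntegral_congr_fun (b.measurableSet_sheet i) fun y hy =>
    b.indicator_comp_inv_apply_of_mem_sheet φ hy

lemma ae_density_eq_zero_of_inv_mem {N : Set X} (hN : MeasurableSet N) (hνN : ν N = 0) (i : ι) :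
    ∀ᵐ x ∂μ, x ∈ b.dom i → b.inv i x ∈ N → b.density ν μ i x = 0 := by
  have hφ : Measurable (N.indicator (1 : X → ℝ≥0∞)) := measurable_one.indicator hN
  have hzero :
      ∫⁻ x, b.density ν μ i x * (b.dom i).indicator (N.indicator 1 ∘ b.inv i) x ∂μ = 0 := by
    rw [lintegral_density_mul hr hac hφ, lintegral_indicator_one hN]
    exact Measure.absolutelyContinuous_of_le Measure.restrict_le_self hνN
  have hmeas := (b.measurable_density ν μ i).mul (b.measurable_indicator_comp_inv hφ i)
  filter_upwards [(lintegral_eq_zero_iff hmeas).1 hzero] with x hx hdom hinv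
  simpa [indicator_of_mem hdom, hinv] using hx

variable [Countable ι]

lemma transfer_congr_ae {f f' : X → ℝ} (hff' : f =ᵐ[ν] f') :
    b.transfer ν μ f =ᵐ[μ] b.transfer ν μ f' := by
  set N := toMeasurable ν {y | f y ≠ f' y}
  have hνN : ν N = 0 := by rw [measure_toMeasurable]; exact ae_iff.1 hff'
  filter_upwards [(ae_all_iff (ι := ι)).2 fun i => ae_density_eq_zero_of_inv_mem (b := b) hr hac
    (measurableSet_toMeasurable ν _) hνN i] with x hx
  rw [transfer_eq_tsum, transfer_eq_tsum]
  refine tsum_congr fun i => ?_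
  by_cases hdom : x ∈ b.dom i
  · by_cases hN : b.inv i x ∈ N
    · simp [hx i hdom hN]
    · have : f (b.inv i x) = f' (b.inv i x) := not_not.1 fun h => hN (subset_toMeasurable _ _ h)
      simp [hdom, this]
  · simp [hdom]

lemma tsum_lintegral_enorm_density_mul_le {f : X → ℝ} (hf : Measurable f) :
    ∑' i, ∫⁻ x, ‖(b.density ν μ i x).toReal * (b.dom i).indicator (f ∘ b.inv i) x‖ₑ ∂μ ≤
      ∫⁻ y, ‖f y‖ₑ ∂ν :=
  calc _ ≤ ∑' i, ∫⁻ x, b.density ν μ i x * (b.dom i).indicator ((‖f ·‖ₑ) ∘ b.inv i) x ∂μ := by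
        gcongr with i x
        rw [enorm_mul, enorm_indicator_eq_indicator_enorm,
          Real.enorm_eq_ofReal ENNReal.toReal_nonneg]
        exact mul_le_mul' ENNReal.ofReal_toReal_le le_rfl
    _ = ∑' i, ∫⁻ y in b.sheet i, ‖f y‖ₑ ∂ν := by simp_rw [lintegral_density_mul hr hac hf.enorm]
    _ = ∫⁻ y, ‖f y‖ₑ ∂ν := by
        rw [← lintegral_iUnion b.measurableSet_sheet b.pairwise_disjoint_sheet, b.iUnion_sheet,
          Measure.restrict_univ]

lemma integrable_transfer {f : X → ℝ} (hf : Measurable f) (hfi : Integrable f ν) :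
    Integrable (b.transfer ν μ f) μ := by
  rw [transfer_eq_tsum]
  exact integrable_tsum_of_measurable (b.measurable_density_mul_indicator_comp_inv ν μ hf)
    ((tsum_lintegral_enorm_density_mul_le hr hac hf).trans_lt hfi.2)

lemma integral_transfer {f : X → ℝ} (hf : Measurable f) (hfi : Integrable f ν) :
    ∫ x, b.transfer ν μ f x ∂μ = ∫ y, f y ∂ν := by
  simp only [transfer_eq_tsum]
  rw [integral_tsum
    (fun i => (b.measurable_density_mul_indicator_comp_inv ν μ hf i).aestronglyMeasurable)
    ((tsum_lintegral_enorm_density_mul_le hr hac hf).trans_lt hfi.2).ne]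
  simp_rw [integral_density_mul hr hac hf]
  rw [← integral_iUnion b.measurableSet_sheet b.pairwise_disjoint_sheet hfi.integrableOn,
    b.iUnion_sheet, Measure.restrict_univ]

lemma setIntegral_transfer {f : X → ℝ} (hf : Measurable f) (hfi : Integrable f ν) {E : Set Y}
    (hE : MeasurableSet E) : ∫ x in E, b.transfer ν μ f x ∂μ = ∫ y in r ⁻¹' E, f y ∂ν := by
  rw [← integral_indicator hE, ← transfer_indicator_preimage,
    integral_transfer hr hac (hf.indicator (hr hE)) (hfi.indicator (hr hE)),
    integral_indicator (hr hE)]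

theorem ae_eq_transfer_of_forall_setIntegral_eq {f : X → ℝ} (hf : Integrable f ν) {ρ : Y → ℝ}
    (hρ : Integrable ρ μ)
    (h : ∀ E, MeasurableSet E → ∫ x in E, ρ x ∂μ = ∫ y in r ⁻¹' E, f y ∂ν) :
    ρ =ᵐ[μ] b.transfer ν μ f := by
  have hmk : Measurable (hf.1.mk f) := hf.1.stronglyMeasurable_mk.measurable
  have hmki : Integrable (hf.1.mk f) ν := hf.congr hf.1.ae_eq_mk
  refine (Integrable.ae_eq_of_forall_setIntegral_eq _ _ hρ (integrable_transfer hr hac hmk hmki)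
    fun E hE _ => ?_).trans (transfer_congr_ae hr hac hf.1.ae_eq_mk.symm)
  rw [h E hE, setIntegral_transfer hr hac hmk hmki hE]
  exact integral_congr_ae (ae_restrict_of_ae hf.1.ae_eq_mk)

end MeasurableBranches

section WithDensity

variable {X Y : Type*} [MeasurableSpace X] [MeasurableSpace Y] {μ : Measure X} {V : X → ℝ}
  (hVm : Measurable V) (hV0 : ∀ x, 0 ≤ V x)
include hVm hV0

lemma integral_withDensity_ofReal (g : X → ℝ) :
    ∫ x, g x ∂μ.withDensity (fun x => ENNReal.ofReal (V x)) = ∫ x, V x * g x ∂μ := by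
  rw [show (fun x => ENNReal.ofReal (V x)) = fun x => ((V x).toNNReal : ℝ≥0∞) from rfl,
    integral_withDensity_eq_integral_smul hVm.real_toNNReal]
  simp_rw [NNReal.smul_def, Real.coe_toNNReal _ (hV0 _), smul_eq_mul]

lemma integrable_withDensity_ofReal_iff {g : X → ℝ} :
    Integrable g (μ.withDensity fun x => ENNReal.ofReal (V x)) ↔
      Integrable (fun x => V x * g x) μ := by
  rw [show (fun x => ENNReal.ofReal (V x)) = fun x => ((V x).toNNReal : ℝ≥0∞) from rfl,
    integrable_withDensity_iff_integrable_smul hVm.real_toNNReal]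
  simp_rw [NNReal.smul_def, Real.coe_toNNReal _ (hV0 _), smul_eq_mul]

lemma setIntegral_preimage_withDensity_ofReal {r : X → Y} (hr : Measurable r) (f : X → ℝ)
    {E : Set Y} (hE : MeasurableSet E) :
    ∫ y in r ⁻¹' E, f y ∂μ.withDensity (fun x => ENNReal.ofReal (V x)) =
      ∫ x, V x * f x * E.indicator 1 (r x) ∂μ := by
  rw [← integral_indicator (hr hE), integral_withDensity_ofReal hVm hV0]
  congr with x
  by_cases hx : r x ∈ E <;> simp [hx]

lemma map_withDensity_ofReal_eq {r : X → Y} (hr : Measurable r) {μ' : Measure Y}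
    [IsFiniteMeasure μ'] (hVi : Integrable V μ)
    (h : ∀ E, MeasurableSet E → ∫ x, V x * E.indicator 1 (r x) ∂μ = ∫ y, E.indicator 1 y ∂μ') :
    (μ.withDensity fun x => ENNReal.ofReal (V x)).map r = μ' := by
  have := isFiniteMeasure_withDensity_ofReal hVi.2
  ext E hE
  rw [← ENNReal.toReal_eq_toReal_iff' (measure_ne_top _ _) (measure_ne_top _ _),
    ← measureReal_def, ← measureReal_def, ← integral_indicator_one hE,
    ← integral_indicator_one hE, ← h E hE,
    integral_map hr.aemeasurable (measurable_one.indicator hE).aestronglyMeasurable,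
    integral_withDensity_ofReal hVm hV0]

end WithDensity

def MeasurableBranches.ofLabeling {X : Type*} [MeasurableSpace X] {r : X → X} (c : X → ℕ)
    (hcm : Measurable c) (τ : ℕ → X → X)
    (hτfib : ∀ x, r ⁻¹' {x} = (fun i => τ i x) '' {i | 1 ≤ i ∧ i ≤ c x})
    (hτinj : ∀ x, InjOn (fun i => τ i x) {i | 1 ≤ i ∧ i ≤ c x})
    (hτmeas : ∀ i, Measurable (({x | i ≤ c x}).domRestrict (τ i)))
    (hτim : ∀ i, MeasurableSet (τ i '' {x | i ≤ c x})) : MeasurableBranches r ℕ where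
  dom n := {x | n + 1 ≤ c x}
  inv n := τ (n + 1)
  measurableSet_dom _ := measurableSet_le measurable_const hcm
  measurable_inv n := hτmeas (n + 1)
  measurableSet_image n := hτim (n + 1)
  apply_inv n x hx := by
    change τ (n + 1) x ∈ r ⁻¹' {x}
    rw [hτfib]
    exact ⟨n + 1, ⟨n.succ_pos, hx⟩, rfl⟩
  exists_inv_apply y := by
    have : y ∈ r ⁻¹' {r y} := rfl
    rw [hτfib] at this
    obtain ⟨i, ⟨hi, hic⟩, hy⟩ := this
    obtain ⟨n, rfl⟩ : ∃ n, i = n + 1 := ⟨i - 1, by omega⟩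
    exact ⟨n, hic, hy⟩
  injOn x m hm n hn h := by
    have := hτinj x ⟨m.succ_pos, hm⟩ ⟨n.succ_pos, hn⟩ h
    omega
  finite_setOf_mem_dom x := (finite_Iio (c x)).subset fun n (hn : n + 1 ≤ c x) => by
    simp only [mem_Iio]
    omega

theorem stmt8_general {X : Type*} [MeasurableSpace X] (r : X → X) (hr : Measurable r)
    (c : X → ℕ) (hcm : Measurable c)
    (τ : ℕ → X → X)
    (hτfib : ∀ x, r ⁻¹' {x} = (fun i => τ i x) '' {i | 1 ≤ i ∧ i ≤ c x})
    (hτinj : ∀ x, Set.InjOn (fun i => τ i x) {i | 1 ≤ i ∧ i ≤ c x})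
    (hτmeas : ∀ i, Measurable (({x | i ≤ c x}).restrict (τ i)))
    (hτim : ∀ i, MeasurableSet (τ i '' {x | i ≤ c x}))
    (V : X → ℝ) (hVm : Measurable V) (hVpos : ∀ x, 0 ≤ V x) (hVbdd : ∃ C, ∀ x, V x ≤ C)
    (μ₀ : Measure X) [IsFiniteMeasure μ₀]
    (hfp : ∀ f : X → ℝ, Measurable f → (∃ C, ∀ x, |f x| ≤ C) →
      ∫ x, V x * f (r x) ∂μ₀ = ∫ x, f x ∂μ₀) :
    ∃ Δ : X → ℝ, Measurable Δ ∧ (∀ x, 0 ≤ Δ x) ∧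
      ∀ f : X → ℝ, Integrable f μ₀ →
        ∀ ρ : X → ℝ, Integrable ρ μ₀ →
          (∀ g : X → ℝ, Measurable g → (∃ C, ∀ x, |g x| ≤ C) →
            ∫ x, V x * f x * g (r x) ∂μ₀ = ∫ x, ρ x * g x ∂μ₀) →
          ∀ᵐ x ∂μ₀, ρ x = ∑ᶠ y ∈ r ⁻¹' {x}, Δ y * f y := by
  obtain ⟨C, hC⟩ := hVbdd
  have hVle : ∀ x, ‖V x‖ ≤ C := fun x => (Real.norm_of_nonneg (hVpos x)).trans_le (hC x)
  have hVi : Integrable V μ₀ := .of_bound hVm.aestronglyMeasurable C (ae_of_all _ hVle)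
  have hind : ∀ E : Set X, ∃ C, ∀ x, |E.indicator (1 : X → ℝ) x| ≤ C :=
    fun E => ⟨1, fun x => by by_cases hx : x ∈ E <;> simp [hx]⟩
  set ν := μ₀.withDensity fun x => ENNReal.ofReal (V x)
  have : IsFiniteMeasure ν := isFiniteMeasure_withDensity_ofReal hVi.2
  have hmap : ν.map r = μ₀ := map_withDensity_ofReal_eq hVm hVpos hr hVi fun E hE =>
    hfp _ (measurable_one.indicator hE) (hind E)
  let b := MeasurableBranches.ofLabeling c hcm τ hτfib hτinj hτmeas hτim
  refine ⟨b.weight ν μ₀, b.measurable_weight hr, fun _ => ENNReal.toReal_nonneg,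
    fun f hf ρ hρ hρf => b.ae_eq_transfer_of_forall_setIntegral_eq hr hmap.absolutelyContinuous
      ((integrable_withDensity_ofReal_iff hVm hVpos).2 (hf.bdd_mul hVm.aestronglyMeasurable
        (ae_of_all _ hVle))) hρ fun E hE => ?_⟩
  rw [← integral_mul_indicator_one ρ hE, ← hρf _ (measurable_one.indicator hE) (hind E),
    setIntegral_preimage_withDensity_ofReal hVm hVpos hr f hE]

/-- If μ₀ has the fixed-point property and the branches of r⁻¹ can be labeled
measurably, then there is a nonnegative measurable Δ with
(R_{μ₀}(V f))(x) = ∑_{r(y)=x} Δ(y) f(y) for μ₀-a.e. x, for every f ∈ L¹(X,μ₀);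
here R_{μ₀}(V f) is any integrable ρ with ∫ V·f·(g∘r) dμ₀ = ∫ ρ·g dμ₀ for bounded
measurable g. -/
theorem stmt8 {X : Type*} [MeasurableSpace X] (r : X → X) (hr : Measurable r)
    (hsurj : Function.Surjective r) (hfin : ∀ x, (r ⁻¹' {x}).Finite)
    (c : X → ℕ) (hc : ∀ x, c x = Nat.card (r ⁻¹' {x})) (hcm : Measurable c)
    (τ : ℕ → X → X)
    (hτfib : ∀ x, r ⁻¹' {x} = (fun i => τ i x) '' {i | 1 ≤ i ∧ i ≤ c x})
    (hτinj : ∀ x, Set.InjOn (fun i => τ i x) {i | 1 ≤ i ∧ i ≤ c x})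
    (hτmeas : ∀ i, Measurable (({x | i ≤ c x}).restrict (τ i)))
    (hτim : ∀ i, MeasurableSet (τ i '' {x | i ≤ c x}))
    (V : X → ℝ) (hVm : Measurable V) (hVpos : ∀ x, 0 ≤ V x) (hVbdd : ∃ C, ∀ x, V x ≤ C)
    (μ₀ : Measure X) [IsFiniteMeasure μ₀]
    (hfp : ∀ f : X → ℝ, Measurable f → (∃ C, ∀ x, |f x| ≤ C) →
      ∫ x, V x * f (r x) ∂μ₀ = ∫ x, f x ∂μ₀) :
    ∃ Δ : X → ℝ, Measurable Δ ∧ (∀ x, 0 ≤ Δ x) ∧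
      ∀ f : X → ℝ, Integrable f μ₀ →
        ∀ ρ : X → ℝ, Integrable ρ μ₀ →
          (∀ g : X → ℝ, Measurable g → (∃ C, ∀ x, |g x| ≤ C) →
            ∫ x, V x * f x * g (r x) ∂μ₀ = ∫ x, ρ x * g x ∂μ₀) →
          ∀ᵐ x ∂μ₀, ρ x = ∑ᶠ y ∈ r ⁻¹' {x}, Δ y * f y :=
  stmt8_general r hr c hcm τ hτfib hτinj hτmeas hτim V hVm hVpos hVbdd μ₀ hfp
end

section
/- (Uniqueness of Δ) If Δ and Δ′ are two nonnegative measurable functions, each satisfying ∑_{r(y)=x} Δ(y) = 1 μ₀-a.e. and ∫ V·f dμ₀ = ∫ ∑_{r(y)=x} Δ(y) f(y) dμ₀(x) for all f ∈ L^∞(X, μ₀) (and similarly for Δ′), then Δ = Δ′ holds V·dμ₀-almost everywhere. -/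
open MeasureTheory

lemma aux11 {X : Type*} [MeasurableSpace X] (r : X → X)
    (hfin : ∀ x, (r ⁻¹' {x}).Finite)
    (V : X → ℝ) (μ₀ : Measure X)
    (Δ Δ' : X → ℝ) (hΔm : Measurable Δ) (hΔ'm : Measurable Δ')
    (hΔpos : ∀ x, 0 ≤ Δ x) (hΔ'pos : ∀ x, 0 ≤ Δ' x)
    (hΔint : ∀ f : X → ℝ, Measurable f → (∃ C, ∀ x, |f x| ≤ C) →
      ∫ x, V x * f x ∂μ₀ = ∫ x, ∑ᶠ y ∈ r ⁻¹' {x}, Δ y * f y ∂μ₀)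
    (hΔ'int : ∀ f : X → ℝ, Measurable f → (∃ C, ∀ x, |f x| ≤ C) →
      ∫ x, V x * f x ∂μ₀ = ∫ x, ∑ᶠ y ∈ r ⁻¹' {x}, Δ' y * f y ∂μ₀) :
    ∫ x, V x * ({x | Δ' x < Δ x}).indicator (fun _ => (1:ℝ)) x ∂μ₀ = 0 := by
  set A : Set X := {x | Δ' x < Δ x} with hA
  have hAm : MeasurableSet A := measurableSet_lt hΔ'm hΔm
  set f : X → ℝ := A.indicator (fun _ => (1:ℝ)) with hfdef
  have hfm : Measurable f := measurable_const.indicator hAm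
  have hfb : ∃ C, ∀ x, |f x| ≤ C := ⟨1, fun x => by
    by_cases hx : x ∈ A <;>
      simp [hfdef, Set.indicator_of_mem, Set.indicator_of_notMem, hx]⟩
  have hfnonneg : ∀ x, 0 ≤ f x := fun x => Set.indicator_nonneg (fun _ _ => zero_le_one) x
  set F : X → ℝ := fun x => ∑ᶠ y ∈ r ⁻¹' {x}, Δ y * f y with hF
  set G : X → ℝ := fun x => ∑ᶠ y ∈ r ⁻¹' {x}, Δ' y * f y with hG
  have h1 : ∫ x, V x * f x ∂μ₀ = ∫ x, F x ∂μ₀ := hΔint f hfm hfb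
  have h2 : ∫ x, V x * f x ∂μ₀ = ∫ x, G x ∂μ₀ := hΔ'int f hfm hfb
  have hFs : ∀ x, F x = ∑ y ∈ (hfin x).toFinset, Δ y * f y := by
    intro x
    have h := finsum_mem_coe_finset (s := (hfin x).toFinset) (f := fun y => Δ y * f y)
    rw [Set.Finite.coe_toFinset] at h
    exact h
  have hGs : ∀ x, G x = ∑ y ∈ (hfin x).toFinset, Δ' y * f y := by
    intro x
    have h := finsum_mem_coe_finset (s := (hfin x).toFinset) (f := fun y => Δ' y * f y)
    rw [Set.Finite.coe_toFinset] at h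
    exact h
  have hterm : ∀ y, Δ' y * f y ≤ Δ y * f y := by
    intro y
    by_cases hy : y ∈ A
    · have : f y = 1 := Set.indicator_of_mem hy _
      rw [this]
      simpa using le_of_lt hy
    · have : f y = 0 := Set.indicator_of_notMem hy _
      simp [this]
  have hGF : ∀ x, G x ≤ F x := by
    intro x
    rw [hFs, hGs]
    exact Finset.sum_le_sum fun y _ => hterm y
  by_cases hFi : Integrable F μ₀
  · by_cases hGi : Integrable G μ₀
    · -- both integrable: F = G a.e., hence F = 0 a.e.
      have hsub : ∫ x, (F x - G x) ∂μ₀ = 0 := by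
        rw [integral_sub hFi hGi, ← h1, ← h2, sub_self]
      have hnn : 0 ≤ᵐ[μ₀] fun x => F x - G x :=
        Filter.Eventually.of_forall fun x => sub_nonneg.mpr (hGF x)
      have heq : (fun x => F x - G x) =ᵐ[μ₀] 0 :=
        (integral_eq_zero_iff_of_nonneg_ae hnn (hFi.sub hGi)).mp hsub
      have hF0 : F =ᵐ[μ₀] 0 := by
        filter_upwards [heq] with x hx
        have hx' : ∑ y ∈ (hfin x).toFinset, (Δ y * f y - Δ' y * f y) = 0 := by
          rw [Finset.sum_sub_distrib, ← hFs, ← hGs]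
          exact hx
        have hz := (Finset.sum_eq_zero_iff_of_nonneg
          (fun y _ => sub_nonneg.mpr (hterm y))).mp hx'
        have : ∀ y ∈ (hfin x).toFinset, Δ y * f y = 0 := by
          intro y hy
          by_cases hyA : y ∈ A
          · have hf1 : f y = 1 := Set.indicator_of_mem hyA _
            have := hz y hy
            rw [hf1, mul_one, mul_one, sub_eq_zero] at this
            exact absurd this (ne_of_gt hyA)
          · have : f y = 0 := Set.indicator_of_notMem hyA _
            simp [this]
        show F x = 0
        rw [hFs]
        exact Finset.sum_eq_zero this
      rw [h1, integral_eq_zero_of_ae hF0]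
    · rw [h2, integral_undef hGi]
  · rw [h1, integral_undef hFi]


/-- Uniqueness of Δ: If Δ and Δ′ are nonnegative measurable functions, each
satisfying ∑_{r(y)=x} Δ(y) = 1 μ₀-a.e. and ∫ V·f dμ₀ = ∫ ∑_{r(y)=x} Δ(y) f(y) dμ₀(x)
for all bounded measurable f, then Δ = Δ′ V·dμ₀-almost everywhere. -/
theorem stmt11 {X : Type*} [MeasurableSpace X] (r : X → X) (hr : Measurable r)
    (hsurj : Function.Surjective r) (hfin : ∀ x, (r ⁻¹' {x}).Finite)
    (c : X → ℕ) (hc : ∀ x, c x = Nat.card (r ⁻¹' {x})) (hcm : Measurable c)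
    (τ : ℕ → X → X)
    (hτfib : ∀ x, r ⁻¹' {x} = (fun i => τ i x) '' {i | 1 ≤ i ∧ i ≤ c x})
    (hτinj : ∀ x, Set.InjOn (fun i => τ i x) {i | 1 ≤ i ∧ i ≤ c x})
    (V : X → ℝ) (hVm : Measurable V) (hVpos : ∀ x, 0 ≤ V x) (hVbdd : ∃ C, ∀ x, V x ≤ C)
    (μ₀ : Measure X) [IsFiniteMeasure μ₀]
    (hfp : ∀ f : X → ℝ, Measurable f → (∃ C, ∀ x, |f x| ≤ C) →
      ∫ x, V x * f (r x) ∂μ₀ = ∫ x, f x ∂μ₀)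
    (Δ Δ' : X → ℝ) (hΔm : Measurable Δ) (hΔ'm : Measurable Δ')
    (hΔpos : ∀ x, 0 ≤ Δ x) (hΔ'pos : ∀ x, 0 ≤ Δ' x)
    (hΔ1 : ∀ᵐ x ∂μ₀, ∑ᶠ y ∈ r ⁻¹' {x}, Δ y = 1)
    (hΔ'1 : ∀ᵐ x ∂μ₀, ∑ᶠ y ∈ r ⁻¹' {x}, Δ' y = 1)
    (hΔint : ∀ f : X → ℝ, Measurable f → (∃ C, ∀ x, |f x| ≤ C) →
      ∫ x, V x * f x ∂μ₀ = ∫ x, ∑ᶠ y ∈ r ⁻¹' {x}, Δ y * f y ∂μ₀)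
    (hΔ'int : ∀ f : X → ℝ, Measurable f → (∃ C, ∀ x, |f x| ≤ C) →
      ∫ x, V x * f x ∂μ₀ = ∫ x, ∑ᶠ y ∈ r ⁻¹' {x}, Δ' y * f y ∂μ₀) :
    ∀ᵐ x ∂(μ₀.withDensity fun x => ENNReal.ofReal (V x)), Δ x = Δ' x := by
  obtain ⟨C, hC⟩ := hVbdd
  have hA0 := aux11 r hfin V μ₀ Δ Δ' hΔm hΔ'm hΔpos hΔ'pos hΔint hΔ'int
  have hB0 := aux11 r hfin V μ₀ Δ' Δ hΔ'm hΔm hΔ'pos hΔpos hΔ'int hΔint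
  -- turn the zero integrals into a.e. statements
  have key : ∀ (A : Set X), MeasurableSet A →
      (∫ x, V x * A.indicator (fun _ => (1:ℝ)) x ∂μ₀ = 0) →
      ∀ᵐ x ∂μ₀, V x * A.indicator (fun _ => (1:ℝ)) x = 0 := by
    intro A hAm hint
    have hnn : 0 ≤ᵐ[μ₀] fun x => V x * A.indicator (fun _ => (1:ℝ)) x :=
      Filter.Eventually.of_forall fun x =>
        mul_nonneg (hVpos x) (Set.indicator_nonneg (fun _ _ => zero_le_one) x)
    have hmeas : Measurable fun x => V x * A.indicator (fun _ => (1:ℝ)) x :=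
      hVm.mul (measurable_const.indicator hAm)
    have hintg : Integrable (fun x => V x * A.indicator (fun _ => (1:ℝ)) x) μ₀ := by
      refine Integrable.mono' (integrable_const C) hmeas.aestronglyMeasurable ?_
      refine Filter.Eventually.of_forall fun x => ?_
      have h0 : 0 ≤ V x * A.indicator (fun _ => (1:ℝ)) x :=
        mul_nonneg (hVpos x) (Set.indicator_nonneg (fun _ _ => zero_le_one) x)
      rw [Real.norm_eq_abs, abs_of_nonneg h0]
      calc V x * A.indicator (fun _ => (1:ℝ)) x ≤ V x * 1 := by
            refine mul_le_mul_of_nonneg_left ?_ (hVpos x)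
            by_cases hx : x ∈ A <;>
              simp [Set.indicator_of_mem, Set.indicator_of_notMem, hx]
        _ ≤ C := by rw [mul_one]; exact hC x
    exact (integral_eq_zero_iff_of_nonneg_ae hnn hintg).mp hint
  have hAe := key _ (measurableSet_lt hΔ'm hΔm) hA0
  have hBe := key _ (measurableSet_lt hΔm hΔ'm) hB0
  rw [ae_withDensity_iff hVm.ennreal_ofReal]
  filter_upwards [hAe, hBe] with x h1 h2 h3
  have hV : 0 < V x := by
    rcases lt_or_eq_of_le (hVpos x) with h | h
    · exact h
    · exact absurd (by simp [← h]) h3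
  have hnA : ¬ Δ' x < Δ x := by
    intro hx
    rw [Set.indicator_of_mem (show x ∈ {a | Δ' a < Δ a} from hx), mul_one] at h1
    exact hV.ne' h1
  have hnB : ¬ Δ x < Δ' x := by
    intro hx
    rw [Set.indicator_of_mem (show x ∈ {a | Δ a < Δ' a} from hx), mul_one] at h2
    exact hV.ne' h2
  exact le_antisymm (not_lt.mp hnA) (not_lt.mp hnB)
end

section
/- (Consistency of path measures) Let D : X → [0,∞) be measurable with ∑_{r(y)=x} D(y) = 1 for all x, and D^{(n)} := D · (D ∘ r) ⋯ (D ∘ r^{n-1}). Then for each x₀ ∈ X and each bounded measurable function f of n variables, ∑_{r^{n+1}(x_{n+1})=x₀} D^{(n+1)}(x_{n+1}) f(x₁,…,x_n) = ∑_{r^n(x_n)=x₀} D^{(n)}(x_n) f(x₁,…,x_n), where in each sum x_k := r^{(n+1)-k}(x_{n+1}) resp. r^{n-k}(x_n). -/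
lemma iter_fiber_finite {X : Type*} (r : X → X) (hfin : ∀ x, (r ⁻¹' {x}).Finite) :
    ∀ n x, ((r^[n]) ⁻¹' {x}).Finite := by
  intro n
  induction n with
  | zero => intro x; simp
  | succ n ih =>
    intro x
    have h : (r^[n+1]) ⁻¹' {x} = ⋃ y ∈ (r^[n]) ⁻¹' {x}, r ⁻¹' {y} := by
      ext z; simp [Function.iterate_succ_apply]
    rw [h]
    exact (ih x).biUnion (fun y _ => hfin y)

/-- Consistency of path measures: with ∑_{r(y)=x} D(y) = 1 and
D⁽ⁿ⁾ := D·(D∘r)⋯(D∘r^{n-1}), for each x₀ and each function f of n path variables,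
the (n+1)-level sum equals the n-level sum; paths are indexed by their deepest point:
x_{k+1} = r^{n-(k+1)}(x_n) resp. x_{k+1} = r^{(n+1)-(k+1)}(x_{n+1}). -/
theorem stmt12 {X : Type*} (r : X → X)
    (hsurj : Function.Surjective r) (hfin : ∀ x, (r ⁻¹' {x}).Finite)
    (D : X → ℝ) (hDpos : ∀ x, 0 ≤ D x)
    (hD1 : ∀ x, ∑ᶠ y ∈ r ⁻¹' {x}, D y = 1)
    (x₀ : X) (n : ℕ) (f : (Fin n → X) → ℝ)
    (hfbdd : ∃ C, ∀ v, |f v| ≤ C) :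
    ∑ᶠ z ∈ (r^[n+1]) ⁻¹' {x₀},
        (∏ j ∈ Finset.range (n+1), D (r^[j] z)) * f (fun k => r^[n - (k : ℕ)] z)
      = ∑ᶠ y ∈ (r^[n]) ⁻¹' {x₀},
        (∏ j ∈ Finset.range n, D (r^[j] y)) * f (fun k => r^[n - 1 - (k : ℕ)] y) := by
  have hSfin := iter_fiber_finite r hfin
  have hset : (r^[n+1]) ⁻¹' {x₀} = ⋃ y ∈ (r^[n]) ⁻¹' {x₀}, r ⁻¹' {y} := by
    ext z; simp [Function.iterate_succ_apply]
  have hdisj : ((r^[n]) ⁻¹' {x₀}).PairwiseDisjoint (fun y => r ⁻¹' {y}) := by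
    intro a _ b _ hab
    refine Set.disjoint_left.mpr ?_
    intro z hza hzb
    exact hab (by simp only [Set.mem_preimage, Set.mem_singleton_iff] at hza hzb; rw [← hza, ← hzb])
  rw [hset, finsum_mem_biUnion hdisj (hSfin n x₀) (fun y _ => hfin y)]
  refine finsum_mem_congr rfl (fun y hy => ?_)
  have hinner : ∀ z ∈ r ⁻¹' {y},
      (∏ j ∈ Finset.range (n+1), D (r^[j] z)) * f (fun k => r^[n - (k : ℕ)] z)
        = D z * ((∏ j ∈ Finset.range n, D (r^[j] y)) * f (fun k => r^[n - 1 - (k : ℕ)] y)) := by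
    intro z hz
    simp only [Set.mem_preimage, Set.mem_singleton_iff] at hz
    have hprod : ∏ j ∈ Finset.range (n+1), D (r^[j] z)
        = (∏ j ∈ Finset.range n, D (r^[j] y)) * D z := by
      rw [Finset.prod_range_succ']
      congr 1
      · refine Finset.prod_congr rfl (fun j _ => ?_)
        rw [Function.iterate_succ_apply, hz]
    have hf : (fun k : Fin n => r^[n - (k : ℕ)] z) = (fun k : Fin n => r^[n - 1 - (k : ℕ)] y) := by
      funext k
      have hk : (k : ℕ) < n := k.isLt
      have h1 : n - (k : ℕ) = (n - 1 - (k : ℕ)) + 1 := by omega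
      rw [h1, Function.iterate_succ_apply, hz]
    rw [hprod, hf]; ring
  rw [finsum_mem_congr rfl hinner]
  rw [← Set.Finite.coe_toFinset (hfin y), finsum_mem_coe_finset, ← Finset.sum_mul,
    ← finsum_mem_coe_finset, Set.Finite.coe_toFinset, hD1 y, one_mul]
end

section
/- (Existence of path measures) Let X be a compact Hausdorff space, r : X → X continuous, onto, finite-to-one, and D : X → [0,∞) measurable with ∑_{r(y)=x} D(y) = 1 for all x. Then for each x₀ ∈ X there exists a Radon probability measure P_{x₀} on the path space Ω_{x₀} := {(x₁,x₂,…) : r(x₁)=x₀, r(x_{k+1})=x_k for all k} such that for every bounded measurable f depending only on the first n coordinates, ∫ f dP_{x₀} = ∑_{r^n(x_n)=x₀} D^{(n)}(x_n) f(x₁,…,x_n). -/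
/-!
Order `X` by a well-order. To every `y` with `r^[n] y = x₀` attach a half-open interval
`cell n y ⊆ [0, 1)` of length `D⁽ⁿ⁾(y)`, in such a way that the cells of the points of `r⁻¹{z}`,
taken in increasing order, cut `cell n z` into consecutive pieces; this is possible because
`∑_{r y = z} D⁽ⁿ⁺¹⁾(y) = D⁽ⁿ⁾(z)`. The cells of each level then partition `[0, 1)`, and recording
for `t ∈ [0, 1)` the cell containing `t` at every level defines a path `codePath t`. The image of
Lebesgue measure on `[0, 1)` under `codePath` is the required measure: its `n`-th marginal is
`∑ D⁽ⁿ⁾(y) δ_y`.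

Regularity costs nothing: the `k`-th coordinate of a path lies in the finite set `r^[k+1] ⁻¹' {x₀}`,
so the path space is a closed subspace of a countable product of finite discrete spaces, hence
compact and metrizable, and its product σ-algebra is the Borel one.
-/

open MeasureTheory Set Topology

section IntervalPartition

variable {α : Type*} [LinearOrder α]

theorem sum_filter_lt_add_le_sum_filter_lt {s : Finset α} {w : α → ℝ} (hw : ∀ u ∈ s, 0 ≤ w u)
    {y y' : α} (hy : y ∈ s) (hyy' : y < y') :
    ∑ u ∈ s with u < y, w u + w y ≤ ∑ u ∈ s with u < y', w u := by
  rw [add_comm, ← Finset.sum_insert (f := w) (by simp)]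
  refine Finset.sum_le_sum_of_subset_of_nonneg ?_ fun u hu _ => hw u (Finset.mem_filter.1 hu).1
  intro u hu
  simp only [Finset.mem_insert, Finset.mem_filter] at hu ⊢
  rcases hu with rfl | ⟨hu, hlt⟩
  · exact ⟨hy, hyy'⟩
  · exact ⟨hu, hlt.trans hyy'⟩

theorem pairwiseDisjoint_Ico_sum_filter_lt (s : Finset α) {w : α → ℝ} (hw : ∀ u ∈ s, 0 ≤ w u)
    (a : ℝ) : (s : Set α).PairwiseDisjoint fun y =>
      Ico (a + ∑ u ∈ s with u < y, w u) (a + ∑ u ∈ s with u < y, w u + w y) := by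
  have key : ∀ y ∈ s, ∀ y', y < y' → Disjoint
      (Ico (a + ∑ u ∈ s with u < y, w u) (a + ∑ u ∈ s with u < y, w u + w y))
      (Ico (a + ∑ u ∈ s with u < y', w u) (a + ∑ u ∈ s with u < y', w u + w y')) := by
    intro y hy y' hyy'
    refine Ico_disjoint_Ico_same.mono_right (Ico_subset_Ico_left ?_)
    linarith [sum_filter_lt_add_le_sum_filter_lt hw hy hyy']
  intro y hy y' hy' hne
  rcases hne.lt_or_gt with h | h
  · exact key y hy y' h
  · exact (key y' hy' y h).symm

theorem biUnion_Ico_sum_filter_lt (s : Finset α) {w : α → ℝ} (hw : ∀ u ∈ s, 0 ≤ w u) (a : ℝ) :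
    ⋃ y ∈ s, Ico (a + ∑ u ∈ s with u < y, w u) (a + ∑ u ∈ s with u < y, w u + w y) =
      Ico a (a + ∑ u ∈ s, w u) := by
  induction s using Finset.induction_on_max with
  | empty => simp
  | insert m s hlt ih =>
    have hm : m ∉ s := fun h => lt_irrefl m (hlt m h)
    have hbelow : ∀ y ∈ s, (insert m s).filter (· < y) = s.filter (· < y) := fun y hy => by
      rw [Finset.filter_insert, if_neg (not_lt.2 (hlt y hy).le)]
    have htop : (insert m s).filter (· < m) = s := by
      rw [Finset.filter_insert, if_neg (lt_irrefl m), Finset.filter_true_of_mem hlt]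
    have hs : ∀ u ∈ s, 0 ≤ w u := fun u hu => hw u (Finset.mem_insert_of_mem hu)
    rw [Finset.set_biUnion_insert, htop, Finset.sum_insert hm, ← add_assoc, add_right_comm a (w m),
      ← Ico_union_Ico_eq_Ico (le_add_of_nonneg_right (Finset.sum_nonneg hs))
        (le_add_of_nonneg_right (hw m (Finset.mem_insert_self m s))), ← ih hs, union_comm]
    congr 1
    refine iUnion₂_congr fun y hy => ?_
    rw [hbelow y hy]

end IntervalPartition

theorem Int.preimage_fract_inter_Ico {U : Set ℝ} (hU : U ⊆ Ico 0 1) :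
    Int.fract ⁻¹' U ∩ Ico 0 1 = U := by
  ext t
  refine ⟨fun ⟨h, ht⟩ => Int.fract_eq_self.2 ht ▸ h, fun h => ⟨?_, hU h⟩⟩
  rwa [mem_preimage, Int.fract_eq_self.2 (hU h)]

theorem integral_finset_sum_ofReal_smul_dirac {X : Type*} [MeasurableSpace X]
    [MeasurableSingletonClass X] (s : Finset X) {c : X → ℝ} (hc : ∀ y ∈ s, 0 ≤ c y) (g : X → ℝ) :
    ∫ y, g y ∂(∑ y ∈ s, ENNReal.ofReal (c y) • Measure.dirac y) = ∑ y ∈ s, c y * g y := by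
  rw [integral_finsetSum_measure fun y _ =>
    (integrable_dirac (by simp)).smul_measure ENNReal.ofReal_ne_top]
  refine Finset.sum_congr rfl fun y hy => ?_
  rw [integral_smul_measure, integral_dirac, ENNReal.toReal_ofReal (hc y hy), smul_eq_mul]

theorem finite_preimage_iterate {X : Type*} {r : X → X} (hfin : ∀ x, (r ⁻¹' {x}).Finite)
    (n : ℕ) (x : X) : (r^[n] ⁻¹' {x}).Finite := by
  induction n with
  | zero => simp
  | succ n ih =>
    rw [Function.iterate_succ, preimage_comp]
    exact ih.preimage' fun z _ => hfin z

abbrev PathSpace {X : Type*} (r : X → X) (x₀ : X) :=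
  {ω : ℕ → X // r (ω 0) = x₀ ∧ ∀ k, r (ω (k + 1)) = ω k}

namespace PathSpace

variable {X : Type*} {r : X → X} {x₀ : X}

theorem iterate_succ_apply (ω : PathSpace r x₀) (k : ℕ) : r^[k + 1] (ω.1 k) = x₀ := by
  induction k with
  | zero => exact ω.2.1
  | succ k ih => rw [Function.iterate_succ_apply, ω.2.2 k, ih]

def toFiberPi (ω : PathSpace r x₀) (k : ℕ) : r^[k + 1] ⁻¹' {x₀} :=
  ⟨ω.1 k, ω.iterate_succ_apply k⟩

theorem coe_comp_toFiberPi :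
    (fun p k => (p k).1 : (∀ k, r^[k + 1] ⁻¹' {x₀}) → ℕ → X) ∘ toFiberPi = Subtype.val :=
  rfl

theorem range_toFiberPi :
    range (toFiberPi (r := r) (x₀ := x₀)) = ⋂ k, {p | r (p (k + 1)).1 = (p k).1} := by
  ext p
  simp only [mem_range, mem_iInter, mem_ofPred_eq]
  refine ⟨?_, fun h => ⟨⟨fun k => (p k).1, (p 0).2, h⟩, rfl⟩⟩
  rintro ⟨ω, rfl⟩ k
  exact ω.2.2 k

theorem measurable_toFiberPi [MeasurableSpace X] : Measurable (toFiberPi (r := r) (x₀ := x₀)) :=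
  measurable_pi_lambda _ fun k => ((measurable_pi_apply k).comp measurable_subtype_coe).subtype_mk

theorem comap_toFiberPi [MeasurableSpace X] :
    MeasurableSpace.comap toFiberPi inferInstance =
      (inferInstance : MeasurableSpace (PathSpace r x₀)) := by
  refine le_antisymm measurable_toFiberPi.comap_le ?_
  change MeasurableSpace.comap Subtype.val _ ≤ _
  rw [← coe_comp_toFiberPi, ← MeasurableSpace.comap_comp]
  exact MeasurableSpace.comap_mono (by fun_prop : Measurable _).comap_le

variable [TopologicalSpace X] [T2Space X]

theorem isClosedEmbedding_toFiberPi (hfin : ∀ x, (r ⁻¹' {x}).Finite) :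
    IsClosedEmbedding (toFiberPi (r := r) (x₀ := x₀)) := by
  have : ∀ k, Finite (r^[k + 1] ⁻¹' {x₀}) := fun k =>
    (finite_preimage_iterate hfin (k + 1) x₀).to_subtype
  have hcont : Continuous (toFiberPi (r := r) (x₀ := x₀)) :=
    continuous_pi fun k => ((continuous_apply k).comp continuous_subtype_val).subtype_mk _
  refine ⟨IsEmbedding.of_comp hcont (by fun_prop)
    (coe_comp_toFiberPi ▸ IsEmbedding.subtypeVal), ?_⟩
  rw [range_toFiberPi]
  exact isClosed_iInter fun k => isClosed_eq
    ((continuous_of_discreteTopology (f := fun y : r^[k + 2] ⁻¹' {x₀} => r y.1)).comp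
      (continuous_apply (k + 1))) (continuous_subtype_val.comp (continuous_apply k))

theorem regular [MeasurableSpace X] [BorelSpace X] (hfin : ∀ x, (r ⁻¹' {x}).Finite)
    (μ : Measure (PathSpace r x₀)) [IsFiniteMeasure μ] : μ.Regular := by
  have : ∀ k, Finite (r^[k + 1] ⁻¹' {x₀}) := fun k =>
    (finite_preimage_iterate hfin (k + 1) x₀).to_subtype
  have hι := isClosedEmbedding_toFiberPi (x₀ := x₀) hfin
  have := hι.compactSpace
  have := hι.isEmbedding.secondCountableTopology
  have : BorelSpace (PathSpace r x₀) :=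
    ⟨by rw [hι.eq_induced, borel_comap, ← BorelSpace.measurable_eq, comap_toFiberPi]⟩
  infer_instance

end PathSpace

namespace PathMeasure

noncomputable section

variable {X : Type*} (r : X → X) (D : X → ℝ)

/-- The weight `D⁽ⁿ⁾` of the statement. -/
def pathWeight (n : ℕ) (y : X) : ℝ := ∏ j ∈ Finset.range n, D (r^[j] y)

variable {r D}

theorem pathWeight_nonneg (hD : ∀ x, 0 ≤ D x) (n : ℕ) (y : X) : 0 ≤ pathWeight r D n y :=
  Finset.prod_nonneg fun _ _ => hD _

theorem pathWeight_succ (n : ℕ) (y : X) :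
    pathWeight r D (n + 1) y = pathWeight r D n (r y) * D y := by
  simp only [pathWeight, Finset.prod_range_succ', Function.iterate_succ_apply,
    Function.iterate_zero_apply]

theorem sum_pathWeight_fiber (hfin : ∀ x, (r ⁻¹' {x}).Finite)
    (hD1 : ∀ x, ∑ᶠ y ∈ r ⁻¹' {x}, D y = 1) (n : ℕ) (z : X) :
    ∑ y ∈ (hfin z).toFinset, pathWeight r D (n + 1) y = pathWeight r D n z := by
  have hr : ∀ y ∈ (hfin z).toFinset, pathWeight r D (n + 1) y = pathWeight r D n z * D y :=
    fun y hy => by rw [pathWeight_succ, (hfin z).mem_toFinset.1 hy]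
  rw [Finset.sum_congr rfl hr, ← Finset.mul_sum, ← finsum_mem_eq_finite_toFinset_sum, hD1, mul_one]

variable [LinearOrder X] (r D) (hfin : ∀ x, (r ⁻¹' {x}).Finite)

def cellStart : ℕ → X → ℝ
  | 0, _ => 0
  | n + 1, y =>
    cellStart n (r y) + ∑ u ∈ (hfin (r y)).toFinset with u < y, pathWeight r D (n + 1) u

def cell (n : ℕ) (y : X) : Set ℝ :=
  Ico (cellStart r D hfin n y) (cellStart r D hfin n y + pathWeight r D n y)

variable {r D}

theorem cell_succ_of_apply_eq {n : ℕ} {z y : X} (hy : r y = z) : cell r D hfin (n + 1) y =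
    Ico (cellStart r D hfin n z + ∑ u ∈ (hfin z).toFinset with u < y, pathWeight r D (n + 1) u)
      (cellStart r D hfin n z + ∑ u ∈ (hfin z).toFinset with u < y, pathWeight r D (n + 1) u +
        pathWeight r D (n + 1) y) := by
  subst hy; rfl

theorem biUnion_cell_fiber (hD : ∀ x, 0 ≤ D x) (hD1 : ∀ x, ∑ᶠ y ∈ r ⁻¹' {x}, D y = 1)
    (n : ℕ) (z : X) : ⋃ y ∈ r ⁻¹' {z}, cell r D hfin (n + 1) y = cell r D hfin n z := by
  calc ⋃ y ∈ r ⁻¹' {z}, cell r D hfin (n + 1) y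
      = ⋃ y ∈ (hfin z).toFinset, Ico
          (cellStart r D hfin n z + ∑ u ∈ (hfin z).toFinset with u < y, pathWeight r D (n + 1) u)
          (cellStart r D hfin n z + ∑ u ∈ (hfin z).toFinset with u < y, pathWeight r D (n + 1) u +
            pathWeight r D (n + 1) y) :=
        iUnion_congr fun y => iUnion_congr_Prop (hfin z).mem_toFinset.symm fun hy =>
          cell_succ_of_apply_eq hfin ((hfin z).mem_toFinset.1 hy)
    _ = cell r D hfin n z := by
      rw [biUnion_Ico_sum_filter_lt _ (fun u _ => pathWeight_nonneg hD _ u),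
        sum_pathWeight_fiber hfin hD1]
      rfl

theorem pairwiseDisjoint_cell_fiber (hD : ∀ x, 0 ≤ D x) (n : ℕ) (z : X) :
    (r ⁻¹' {z}).PairwiseDisjoint (cell r D hfin (n + 1)) := by
  intro y hy y' hy' hne
  rw [Function.onFun, cell_succ_of_apply_eq hfin hy, cell_succ_of_apply_eq hfin hy']
  exact pairwiseDisjoint_Ico_sum_filter_lt _ (fun u _ => pathWeight_nonneg hD _ u) _
    (by simpa using hy) (by simpa using hy') hne

theorem cell_succ_subset (hD : ∀ x, 0 ≤ D x) (hD1 : ∀ x, ∑ᶠ y ∈ r ⁻¹' {x}, D y = 1)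
    (n : ℕ) (y : X) : cell r D hfin (n + 1) y ⊆ cell r D hfin n (r y) :=
  biUnion_cell_fiber hfin hD hD1 n (r y) ▸ subset_biUnion_of_mem (u := cell r D hfin (n + 1)) rfl

variable (x₀ : X)

theorem biUnion_cell (hD : ∀ x, 0 ≤ D x) (hD1 : ∀ x, ∑ᶠ y ∈ r ⁻¹' {x}, D y = 1) (n : ℕ) :
    ⋃ y ∈ r^[n] ⁻¹' {x₀}, cell r D hfin n y = Ico 0 1 := by
  induction n with
  | zero => simp [cell, cellStart, pathWeight]
  | succ n ih =>
    rw [Function.iterate_succ, preimage_comp, ← ih, ← biUnion_preimage_singleton]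
    simp only [biUnion_iUnion]
    exact iUnion₂_congr fun z _ => biUnion_cell_fiber hfin hD hD1 n z

theorem pairwiseDisjoint_cell (hD : ∀ x, 0 ≤ D x) (hD1 : ∀ x, ∑ᶠ y ∈ r ⁻¹' {x}, D y = 1)
    (n : ℕ) : (r^[n] ⁻¹' {x₀}).PairwiseDisjoint (cell r D hfin n) := by
  induction n with
  | zero => simp
  | succ n ih =>
    rw [Function.iterate_succ, preimage_comp, ← biUnion_preimage_singleton]
    refine PairwiseDisjoint.biUnion ?_ fun z _ => pairwiseDisjoint_cell_fiber hfin hD n z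
    exact (funext fun z => biUnion_cell_fiber hfin hD hD1 n z : _ = cell r D hfin n) ▸ ih

variable (r D) in
open Classical in
/-- Composing with `Int.fract` makes `code` meaningful on all of `ℝ`, so that `codePath` below is
a total map into the path space; only its values on `[0, 1)` matter. -/
def code (n : ℕ) (t : ℝ) : X :=
  if h : ∃ y ∈ r^[n] ⁻¹' {x₀}, Int.fract t ∈ cell r D hfin n y then h.choose else x₀

theorem code_spec (hD : ∀ x, 0 ≤ D x) (hD1 : ∀ x, ∑ᶠ y ∈ r ⁻¹' {x}, D y = 1) (n : ℕ) (t : ℝ) :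
    code r D hfin x₀ n t ∈ r^[n] ⁻¹' {x₀} ∧
      Int.fract t ∈ cell r D hfin n (code r D hfin x₀ n t) := by
  have ht : Int.fract t ∈ ⋃ y ∈ r^[n] ⁻¹' {x₀}, cell r D hfin n y := by
    rw [biUnion_cell hfin x₀ hD hD1]
    exact ⟨Int.fract_nonneg t, Int.fract_lt_one t⟩
  have h : ∃ y ∈ r^[n] ⁻¹' {x₀}, Int.fract t ∈ cell r D hfin n y := by simpa using ht
  rw [code, dif_pos h]
  exact h.choose_spec

theorem code_eq_iff (hD : ∀ x, 0 ≤ D x) (hD1 : ∀ x, ∑ᶠ y ∈ r ⁻¹' {x}, D y = 1)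
    {n : ℕ} {t : ℝ} {y : X} (hy : y ∈ r^[n] ⁻¹' {x₀}) :
    code r D hfin x₀ n t = y ↔ Int.fract t ∈ cell r D hfin n y := by
  obtain ⟨hmem, hcell⟩ := code_spec hfin x₀ hD hD1 n t
  exact ⟨fun h => h ▸ hcell, fun h => (pairwiseDisjoint_cell hfin x₀ hD hD1 n).elim hmem hy
    (not_disjoint_iff.2 ⟨_, hcell, h⟩)⟩

theorem apply_code_succ (hD : ∀ x, 0 ≤ D x) (hD1 : ∀ x, ∑ᶠ y ∈ r ⁻¹' {x}, D y = 1)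
    (n : ℕ) (t : ℝ) : r (code r D hfin x₀ (n + 1) t) = code r D hfin x₀ n t := by
  obtain ⟨hmem, hcell⟩ := code_spec hfin x₀ hD hD1 (n + 1) t
  refine ((code_eq_iff hfin x₀ hD hD1 ?_).2 (cell_succ_subset hfin hD hD1 n _ hcell)).symm
  simpa only [mem_preimage, Function.iterate_succ_apply] using hmem

theorem preimage_code (hD : ∀ x, 0 ≤ D x) (hD1 : ∀ x, ∑ᶠ y ∈ r ⁻¹' {x}, D y = 1)
    (n : ℕ) (B : Set X) :
    code r D hfin x₀ n ⁻¹' B = Int.fract ⁻¹' ⋃ y ∈ r^[n] ⁻¹' {x₀} ∩ B, cell r D hfin n y := by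
  ext t
  simp only [mem_preimage, mem_iUnion, mem_inter_iff, exists_prop]
  constructor
  · intro h
    obtain ⟨hmem, hcell⟩ := code_spec hfin x₀ hD hD1 n t
    exact ⟨_, ⟨hmem, h⟩, hcell⟩
  · rintro ⟨y, ⟨hy, hyB⟩, ht⟩
    rwa [(code_eq_iff hfin x₀ hD hD1 hy).2 ht]

def codePath (hD : ∀ x, 0 ≤ D x) (hD1 : ∀ x, ∑ᶠ y ∈ r ⁻¹' {x}, D y = 1) (t : ℝ) :
    PathSpace r x₀ :=
  ⟨fun k => code r D hfin x₀ (k + 1) t,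
    (apply_code_succ hfin x₀ hD hD1 0 t).trans (code_spec hfin x₀ hD hD1 0 t).1,
    fun k => apply_code_succ hfin x₀ hD hD1 (k + 1) t⟩

variable [MeasurableSpace X]

theorem measurable_code (hD : ∀ x, 0 ≤ D x) (hD1 : ∀ x, ∑ᶠ y ∈ r ⁻¹' {x}, D y = 1) (n : ℕ) :
    Measurable (code r D hfin x₀ n) := fun B _ => by
  rw [preimage_code hfin x₀ hD hD1]
  exact measurable_fract <|
    ((finite_preimage_iterate hfin n x₀).inter_of_left B).measurableSet_biUnion
      fun _ _ => measurableSet_Ico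

theorem measurable_codePath (hD : ∀ x, 0 ≤ D x) (hD1 : ∀ x, ∑ᶠ y ∈ r ⁻¹' {x}, D y = 1) :
    Measurable (codePath hfin x₀ hD hD1) :=
  (measurable_pi_lambda _ fun k => measurable_code hfin x₀ hD hD1 (k + 1)).subtype_mk

theorem map_code (hD : ∀ x, 0 ≤ D x) (hD1 : ∀ x, ∑ᶠ y ∈ r ⁻¹' {x}, D y = 1) (n : ℕ) :
    (volume.restrict (Ico (0 : ℝ) 1)).map (code r D hfin x₀ n) =
      ∑ y ∈ (finite_preimage_iterate hfin n x₀).toFinset,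
        ENNReal.ofReal (pathWeight r D n y) • Measure.dirac y := by
  classical
  ext B hB
  have hfilter : ⋃ y ∈ r^[n] ⁻¹' {x₀} ∩ B, cell r D hfin n y =
      ⋃ y ∈ (finite_preimage_iterate hfin n x₀).toFinset.filter (· ∈ B), cell r D hfin n y := by
    ext; simp
  have hsub : ⋃ y ∈ r^[n] ⁻¹' {x₀} ∩ B, cell r D hfin n y ⊆ Ico 0 1 :=
    biUnion_cell hfin x₀ hD hD1 n ▸ biUnion_mono inter_subset_left fun _ _ => subset_rfl
  rw [Measure.map_apply (measurable_code hfin x₀ hD hD1 n) hB,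
    Measure.restrict_apply' measurableSet_Ico, preimage_code hfin x₀ hD hD1,
    Int.preimage_fract_inter_Ico hsub, hfilter,
    measure_biUnion_finset ((pairwiseDisjoint_cell hfin x₀ hD hD1 n).subset fun y hy => by simp_all)
      fun _ _ => measurableSet_Ico, Measure.coe_finsetSum, Finset.sum_apply, Finset.sum_filter]
  refine Finset.sum_congr rfl fun y _ => ?_
  rw [Measure.smul_apply, Measure.dirac_apply' _ hB, cell, Real.volume_Ico, add_sub_cancel_left]
  by_cases hy : y ∈ B <;> simp [hy]

theorem integral_comp_code [MeasurableSingletonClass X] (hD : ∀ x, 0 ≤ D x)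
    (hD1 : ∀ x, ∑ᶠ y ∈ r ⁻¹' {x}, D y = 1) (n : ℕ) {g : X → ℝ} (hg : Measurable g) :
    ∫ t in Ico 0 1, g (code r D hfin x₀ n t) = ∑ᶠ y ∈ r^[n] ⁻¹' {x₀}, pathWeight r D n y * g y := by
  rw [← integral_map (measurable_code hfin x₀ hD hD1 n).aemeasurable hg.aestronglyMeasurable,
    map_code hfin x₀ hD hD1, integral_finset_sum_ofReal_smul_dirac _
      (fun y _ => pathWeight_nonneg hD n y), finsum_mem_eq_finite_toFinset_sum]

end

end PathMeasure

theorem stmt13_general {X : Type*} [TopologicalSpace X] [T2Space X]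
    [MeasurableSpace X] [BorelSpace X]
    (r : X → X)
    (hfin : ∀ x, (r ⁻¹' {x}).Finite)
    (D : X → ℝ) (hDpos : ∀ x, 0 ≤ D x)
    (hD1 : ∀ x, ∑ᶠ y ∈ r ⁻¹' {x}, D y = 1) (x₀ : X) :
    ∃ P : Measure {ω : ℕ → X // r (ω 0) = x₀ ∧ ∀ k, r (ω (k + 1)) = ω k},
      P.Regular ∧ IsProbabilityMeasure P ∧
      ∀ n : ℕ, 1 ≤ n → ∀ g : X → ℝ, Measurable g → (∃ C, ∀ x, |g x| ≤ C) →
        ∫ ω, g (ω.1 (n - 1)) ∂P =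
          ∑ᶠ y ∈ (r^[n]) ⁻¹' {x₀}, (∏ j ∈ Finset.range n, D (r^[j] y)) * g y := by
  let : LinearOrder X := IsWellOrder.linearOrder WellOrderingRel
  have hΦ := PathMeasure.measurable_codePath hfin x₀ hDpos hD1
  have : IsProbabilityMeasure (volume.restrict (Ico (0 : ℝ) 1)) := ⟨by simp⟩
  refine ⟨(volume.restrict (Ico 0 1)).map (PathMeasure.codePath hfin x₀ hDpos hD1),
    PathSpace.regular hfin _, Measure.isProbabilityMeasure_map hΦ.aemeasurable, ?_⟩
  rintro n hn g hg -
  obtain ⟨n, rfl⟩ := Nat.exists_eq_add_of_le' hn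
  rw [Nat.add_sub_cancel, integral_map (f := fun ω : PathSpace r x₀ => g (ω.1 n)) hΦ.aemeasurable
    (hg.comp ((measurable_pi_apply n).comp measurable_subtype_coe)).aestronglyMeasurable]
  exact PathMeasure.integral_comp_code hfin x₀ hDpos hD1 (n + 1) hg

/-- Existence of path measures: X compact Hausdorff, r continuous, onto,
finite-to-one, D ≥ 0 with ∑_{r(y)=x} D(y) = 1 for all x. For each x₀ there is a Radon
(regular) probability measure P_{x₀} on Ω_{x₀} = {(x₁,x₂,…) : r(x₁)=x₀, r(x_{k+1})=x_k}
with ∫ f dP_{x₀} = ∑_{rⁿ(xₙ)=x₀} D⁽ⁿ⁾(xₙ) f(x₁,…,xₙ) for every bounded measurable f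
depending only on the first n coordinates (equivalently, f = g ∘ (n-th coordinate)). -/
theorem stmt13 {X : Type*} [TopologicalSpace X] [CompactSpace X] [T2Space X]
    [MeasurableSpace X] [BorelSpace X]
    (r : X → X) (hrc : Continuous r) (hsurj : Function.Surjective r)
    (hfin : ∀ x, (r ⁻¹' {x}).Finite)
    (D : X → ℝ) (hDm : Measurable D) (hDpos : ∀ x, 0 ≤ D x)
    (hD1 : ∀ x, ∑ᶠ y ∈ r ⁻¹' {x}, D y = 1) (x₀ : X) :
    ∃ P : Measure {ω : ℕ → X // r (ω 0) = x₀ ∧ ∀ k, r (ω (k + 1)) = ω k},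
      P.Regular ∧ IsProbabilityMeasure P ∧
      ∀ n : ℕ, 1 ≤ n → ∀ g : X → ℝ, Measurable g → (∃ C, ∀ x, |g x| ≤ C) →
        ∫ ω, g (ω.1 (n - 1)) ∂P =
          ∑ᶠ y ∈ (r^[n]) ⁻¹' {x₀}, (∏ j ∈ Finset.range n, D (r^[j] y)) * g y :=
  stmt13_general r hfin D hDpos hD1 x₀
end

section
/- (Iterated transfer operator formula) Suppose μ₀ has the fixed-point property with respect to V and r, with Δ the associated function. Then for every n ≥ 1 and every bounded measurable g, (R_{μ₀}^n(V g))(x₀) = ∑_{r^n(x_n)=x₀} Δ^{(n)}(x_n) g(x_n) for μ₀-a.e. x₀, where Δ^{(n)} := Δ·(Δ∘r)⋯(Δ∘r^{n-1}) and R_{μ₀}^n denotes the n-th iterate f ↦ R_{μ₀}(V·R_{μ₀}(V ⋯ R_{μ₀}(V f)⋯)). -/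
open MeasureTheory

/-- Iterated transfer operator formula: if μ₀ has the fixed-point property
and Δ is the associated function (characterized by (R_{μ₀}(V f))(x) = ∑_{r(y)=x} Δ(y) f(y)
μ₀-a.e.), then for every n ≥ 1, every bounded measurable g and every chain
ρ₀ = g, ρ_{k+1} = R_{μ₀}(V ρ_k) (each characterized by the integral identity),
ρ_n(x₀) = ∑_{rⁿ(xₙ)=x₀} Δ⁽ⁿ⁾(xₙ) g(xₙ) for μ₀-a.e. x₀, with
Δ⁽ⁿ⁾ = Δ·(Δ∘r)⋯(Δ∘r^{n-1}). -/
theorem stmt15 {X : Type*} [MeasurableSpace X] (r : X → X) (hr : Measurable r)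
    (hsurj : Function.Surjective r) (hfin : ∀ x, (r ⁻¹' {x}).Finite)
    (V : X → ℝ) (hVm : Measurable V) (hVpos : ∀ x, 0 ≤ V x) (hVbdd : ∃ C, ∀ x, V x ≤ C)
    (μ₀ : Measure X) [IsFiniteMeasure μ₀]
    (hfp : ∀ f : X → ℝ, Measurable f → (∃ C, ∀ x, |f x| ≤ C) →
      ∫ x, V x * f (r x) ∂μ₀ = ∫ x, f x ∂μ₀)
    (Δ : X → ℝ) (hΔm : Measurable Δ) (hΔpos : ∀ x, 0 ≤ Δ x)
    (hΔ : ∀ f : X → ℝ, Measurable f → (∃ C, ∀ x, |f x| ≤ C) →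
      ∀ ρ : X → ℝ, Integrable ρ μ₀ →
        (∀ g : X → ℝ, Measurable g → (∃ C, ∀ x, |g x| ≤ C) →
          ∫ x, V x * f x * g (r x) ∂μ₀ = ∫ x, ρ x * g x ∂μ₀) →
        ∀ᵐ x ∂μ₀, ρ x = ∑ᶠ y ∈ r ⁻¹' {x}, Δ y * f y) :
    ∀ n : ℕ, 1 ≤ n → ∀ g : X → ℝ, Measurable g → (∃ C, ∀ x, |g x| ≤ C) →
      ∀ ρ : ℕ → X → ℝ, ρ 0 = g →
        (∀ k < n, Measurable (ρ (k + 1)) ∧ (∃ C, ∀ x, |ρ (k + 1) x| ≤ C) ∧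
          Integrable (ρ (k + 1)) μ₀ ∧
          ∀ g' : X → ℝ, Measurable g' → (∃ C, ∀ x, |g' x| ≤ C) →
            ∫ x, V x * ρ k x * g' (r x) ∂μ₀ = ∫ x, ρ (k + 1) x * g' x ∂μ₀) →
        ∀ᵐ x₀ ∂μ₀, ρ n x₀ =
          ∑ᶠ y ∈ (r^[n]) ⁻¹' {x₀}, (∏ j ∈ Finset.range n, Δ (r^[j] y)) * g y := by
  classical

  have hfinIter : ∀ n (x : X), ((r^[n]) ⁻¹' {x}).Finite := by
    intro n
    induction n with
    | zero => intro x; simp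
    | succ n ih =>
      intro x
      have h : (r^[n+1]) ⁻¹' {x} = ⋃ y ∈ r ⁻¹' {x}, (r^[n]) ⁻¹' {y} := by
        ext z
        simp [← Function.iterate_succ_apply, Function.iterate_succ_apply']
      rw [h]
      exact (hfin x).biUnion (fun y _ => ih y)
  have fsum : ∀ (s : Set X) (hs : s.Finite) (f : X → ℝ),
      (∑ᶠ y ∈ s, f y) = ∑ y ∈ hs.toFinset, f y := by
    intro s hs f
    rw [← finsum_mem_coe_finset, Set.Finite.coe_toFinset]
  have hnull : ∀ N : Set X, μ₀ N = 0 →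
      ∀ᵐ x ∂μ₀, ∀ y, r y = x → Δ y = 0 ∨ y ∉ toMeasurable μ₀ N := by
    intro N hN
    have hN0 : μ₀ (toMeasurable μ₀ N) = 0 := by rw [measure_toMeasurable]; exact hN
    set f : X → ℝ := (toMeasurable μ₀ N).indicator (fun _ => 1) with hf
    have hfm : Measurable f :=
      Measurable.indicator measurable_const (measurableSet_toMeasurable μ₀ N)
    have hfb : ∃ C, ∀ x, |f x| ≤ C := ⟨1, fun x => by
      rw [hf, Set.indicator_apply]; split_ifs <;> norm_num⟩
    have key := hΔ f hfm hfb 0 (integrable_zero _ _ _) ?_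
    · filter_upwards [key] with x hx
      intro y hy
      by_contra hcon
      push_neg at hcon
      obtain ⟨hΔy, hyN⟩ := hcon
      have h0 : ∑ y ∈ (hfin x).toFinset, Δ y * f y = 0 := by
        rw [← fsum _ (hfin x), ← hx]; rfl
      have hall := (Finset.sum_eq_zero_iff_of_nonneg (fun y _ =>
        mul_nonneg (hΔpos y) (by
          rw [hf, Set.indicator_apply]; split_ifs <;> norm_num))).mp h0
      have hymem : y ∈ (hfin x).toFinset := by
        simp [Set.Finite.mem_toFinset, hy]
      have := hall y hymem
      rw [hf, Set.indicator_of_mem hyN] at this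
      simp at this
      exact hΔy this
    · intro g' hg'm hg'b
      have hL : ∫ x, V x * f x * g' (r x) ∂μ₀ = 0 := by
        apply integral_eq_zero_of_ae
        have : ∀ᵐ x ∂μ₀, x ∉ toMeasurable μ₀ N := measure_eq_zero_iff_ae_notMem.mp hN0
        filter_upwards [this] with x hx
        rw [hf, Set.indicator_of_notMem hx]
        simp
      rw [hL]
      have hz : ∀ x : X, (0 : X → ℝ) x * g' x = 0 := fun x => by simp
      simp only [hz, integral_zero]
  intro n hn
  induction n, hn using Nat.le_induction with
  | base =>
    intro g hgm hgb ρ hρ0 hchain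
    obtain ⟨h1m, h1b, h1i, h1eq⟩ := hchain 0 (by norm_num)
    rw [hρ0] at h1eq
    have key := hΔ g hgm hgb (ρ 1) h1i h1eq
    filter_upwards [key] with x hx
    rw [hx]
    apply finsum_mem_congr
    · simp
    · intro y hy
      simp
  | succ n hn ih =>
    intro g hgm hgb ρ hρ0 hchain
    obtain ⟨h1m, h1b, h1i, h1eq⟩ := hchain n (by omega)
    have hρn := hchain (n-1) (by omega)
    rw [Nat.sub_add_cancel hn] at hρn
    obtain ⟨hρnm, hρnb, -, -⟩ := hρn
    have hIH := ih g hgm hgb ρ hρ0 (fun k hk => hchain k (by omega))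
    set F : X → ℝ := fun x => ∑ᶠ y ∈ (r^[n]) ⁻¹' {x},
      (∏ j ∈ Finset.range n, Δ (r^[j] y)) * g y with hF
    set N : Set X := {x | ¬ ρ n x = F x} with hNdef
    have hN0 : μ₀ N = 0 := ae_iff.mp hIH
    have hmem := hnull N hN0
    have hstep := hΔ (ρ n) hρnm hρnb (ρ (n+1)) h1i h1eq
    filter_upwards [hstep, hmem] with x hx1 hx2
    rw [hx1]
    have e1 : (∑ᶠ y ∈ r ⁻¹' {x}, Δ y * ρ n y) = ∑ᶠ y ∈ r ⁻¹' {x}, Δ y * F y := by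
      apply finsum_mem_congr rfl
      intro y hy
      rcases hx2 y hy with h | h
      · rw [h]; ring
      · have hyN : y ∉ N := fun hyN => h (subset_toMeasurable μ₀ N hyN)
        have : ρ n y = F y := by simpa [hNdef] using hyN
        rw [this]
    rw [e1]
    rw [fsum _ (hfin x), fsum _ (hfinIter (n+1) x)]
    have hU : (hfinIter (n+1) x).toFinset
        = (hfin x).toFinset.biUnion (fun y => (hfinIter n y).toFinset) := by
      ext z
      simp [Set.Finite.mem_toFinset, ← Function.iterate_succ_apply, Function.iterate_succ_apply']
    rw [hU, Finset.sum_biUnion]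
    · apply Finset.sum_congr rfl
      intro y hy
      simp only [hF]
      rw [fsum _ (hfinIter n y), Finset.mul_sum]
      apply Finset.sum_congr rfl
      intro z hz
      have hz' : r^[n] z = y := by
        simpa [Set.Finite.mem_toFinset] using hz
      rw [Finset.prod_range_succ, hz']
      ring
    · intro a ha b hb hab
      simp only [Function.onFun, Finset.disjoint_left, Set.Finite.mem_toFinset,
        Set.mem_preimage, Set.mem_singleton_iff]
      intro z hza hzb
      exact hab (hza ▸ hzb ▸ rfl)
end

section
/- (Moments identity) Suppose μ₀ has the fixed-point property with respect to V and r. Then for every n ≥ 1 and every bounded measurable g, ∫ V^{(n)}·g dμ₀ = ∫ R_{μ₀}^n(V g) dμ₀, where V^{(n)} := V·(V∘r)⋯(V∘r^{n-1}). -/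
open MeasureTheory

/-- Moments identity: if μ₀ has the fixed-point property, then for every
n ≥ 1 and every bounded measurable g, ∫ V⁽ⁿ⁾·g dμ₀ = ∫ R_{μ₀}ⁿ(V g) dμ₀, where
V⁽ⁿ⁾ = V·(V∘r)⋯(V∘r^{n-1}) and R_{μ₀}ⁿ(V g) is the n-fold iterate, given by a chain
ρ₀ = g, ρ_{k+1} = R_{μ₀}(V ρ_k) characterized by the integral identity. -/
theorem stmt16 {X : Type*} [MeasurableSpace X] (r : X → X) (hr : Measurable r)
    (hsurj : Function.Surjective r) (hfin : ∀ x, (r ⁻¹' {x}).Finite)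
    (V : X → ℝ) (hVm : Measurable V) (hVpos : ∀ x, 0 ≤ V x) (hVbdd : ∃ C, ∀ x, V x ≤ C)
    (μ₀ : Measure X) [IsFiniteMeasure μ₀]
    (hfp : ∀ f : X → ℝ, Measurable f → (∃ C, ∀ x, |f x| ≤ C) →
      ∫ x, V x * f (r x) ∂μ₀ = ∫ x, f x ∂μ₀) :
    ∀ n : ℕ, 1 ≤ n → ∀ g : X → ℝ, Measurable g → (∃ C, ∀ x, |g x| ≤ C) →
      ∀ ρ : ℕ → X → ℝ, ρ 0 = g →
        (∀ k < n, Measurable (ρ (k + 1)) ∧ (∃ C, ∀ x, |ρ (k + 1) x| ≤ C) ∧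
          Integrable (ρ (k + 1)) μ₀ ∧
          ∀ g' : X → ℝ, Measurable g' → (∃ C, ∀ x, |g' x| ≤ C) →
            ∫ x, V x * ρ k x * g' (r x) ∂μ₀ = ∫ x, ρ (k + 1) x * g' x ∂μ₀) →
        ∫ x, (∏ j ∈ Finset.range n, V (r^[j] x)) * g x ∂μ₀ = ∫ x, ρ n x ∂μ₀ := by
  intro n hn g hgm hgb ρ hρ0 hchain
  set h : ℕ → X → ℝ := fun m x => ∏ j ∈ Finset.range m, V (r^[j] x) with hh
  have hhm : ∀ m, Measurable (h m) := by
    intro m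
    apply Finset.measurable_prod
    intro j _
    exact hVm.comp (hr.iterate j)
  obtain ⟨C, hC⟩ := hVbdd
  have hhb : ∀ m, ∃ D, ∀ x, |h m x| ≤ D := by
    intro m
    refine ⟨(max C 1) ^ m, fun x => ?_⟩
    have h0 : 0 ≤ h m x := Finset.prod_nonneg fun j _ => hVpos _
    rw [abs_of_nonneg h0]
    have : h m x ≤ ∏ _j ∈ Finset.range m, max C 1 := by
      apply Finset.prod_le_prod (fun j _ => hVpos _)
      intro j _
      exact le_trans (hC _) (le_max_left _ _)
    simpa using this
  have hrec : ∀ m x, h (m + 1) x = V x * h m (r x) := by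
    intro m x
    simp only [hh]
    rw [Finset.prod_range_succ']
    simp [Function.iterate_succ_apply, mul_comm]
  have key : ∀ m, m ≤ n → ∫ x, ρ (n - m) x * h m x ∂μ₀ = ∫ x, ρ n x ∂μ₀ := by
    intro m
    induction m with
    | zero => intro _; simp [hh]
    | succ m ih =>
      intro hm
      have hmn : m ≤ n := le_trans (Nat.le_succ m) hm
      rw [← ih hmn]
      obtain ⟨-, -, -, hid⟩ := hchain (n - (m + 1)) (by omega)
      have hk1 : n - (m + 1) + 1 = n - m := by omega
      have := hid (h m) (hhm m) (hhb m)
      rw [hk1] at this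
      rw [← this]
      congr 1
      funext x
      rw [hrec]
      ring
  have := key n le_rfl
  simp only [Nat.sub_self, hρ0] at this
  rw [← this]
  congr 1
  funext x
  rw [mul_comm]
end

section
/- (Disintegration, Theorem 3.4) Let μ̂ be the unique V-quasi-invariant measure on the solenoid X_∞(r) with μ̂ ∘ θ₀⁻¹ = μ₀, where μ₀ has the fixed-point property and Δ is the associated function. For Δ, let P_{x₀} be the path measures of Proposition 2.3. Then for every bounded measurable f on X_∞(r), ∫_{X_∞(r)} f dμ̂ = ∫_X ∫_{Ω_{x₀}} f(x₀, ω) dP_{x₀}(ω) dμ₀(x₀). -/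
/-!
Quasi-invariance determines the marginals of `μ̂`: the law of `θₙ` is `V⁽ⁿ⁾ μ₀`. Writing
`R g x = ∑_{r y = x} Δ y * g y` for the Ruelle operator, the defining identity
`∫ V g dμ₀ = ∫ R g dμ₀` moves one factor of `V⁽ⁿ⁾` at a time onto `R`, so
`∫ V⁽ⁿ⁾ g dμ₀ = ∫ Rⁿ g dμ₀`, and `Rⁿ g x` is exactly the `P x`-integral of `g ∘ θₙ`. Hence `μ̂` and
the mixture `∫ P x dμ₀(x)` have the same marginals. As `θₙ = r ∘ θₙ₊₁`, the σ-algebras generated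
by the `θₙ` increase and exhaust the σ-algebra of the solenoid, so the two finite measures agree.
-/

open MeasureTheory

/-- The solenoid X_∞(r) = {(x₀,x₁,…) : r(x_{n+1}) = x_n}; θ_n ω = ω.1 n. -/
abbrev Solenoid {X : Type*} (r : X → X) := {ω : ℕ → X // ∀ n, r (ω (n + 1)) = ω n}

/-- The shift (x₀,x₁,…) ↦ (x₁,x₂,…), the inverse of r̂; V-quasi-invariance
d(μ̂ ∘ r̂) = (V∘θ₀) dμ̂ reads: map shift μ̂ = μ̂.withDensity (V∘θ₀). -/
def solenoidShift {X : Type*} (r : X → X) : Solenoid r → Solenoid r :=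
  fun ω => ⟨fun n => ω.1 (n + 1), fun n => ω.2 (n + 1)⟩

open ProbabilityTheory

section BoundedFunctions

variable {X : Type*}

lemma exists_abs_indicator_one_le (s : Set X) : ∃ C, ∀ x, |s.indicator (1 : X → ℝ) x| ≤ C :=
  ⟨1, fun x => by by_cases hx : x ∈ s <;> simp [hx]⟩

lemma exists_abs_comp_le {Y : Type*} {f : X → ℝ} (hf : ∃ C, ∀ x, |f x| ≤ C) (φ : Y → X) :
    ∃ C, ∀ y, |f (φ y)| ≤ C :=
  let ⟨C, hC⟩ := hf
  ⟨C, fun y => hC (φ y)⟩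

lemma exists_abs_mul_le {f g : X → ℝ} (hf : ∃ C, ∀ x, |f x| ≤ C) (hg : ∃ C, ∀ x, |g x| ≤ C) :
    ∃ C, ∀ x, |f x * g x| ≤ C :=
  let ⟨C, hC⟩ := hf
  let ⟨D, hD⟩ := hg
  ⟨C * D, fun x => by
    rw [abs_mul]
    exact mul_le_mul (hC x) (hD x) (abs_nonneg _) ((abs_nonneg _).trans (hC x))⟩

end BoundedFunctions

namespace MeasureTheory

variable {α β : Type*} [MeasurableSpace α] [MeasurableSpace β]

lemma Measure.measurable_of_measurable_integral {P : α → Measure β} [∀ x, IsFiniteMeasure (P x)]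
    (h : ∀ f : β → ℝ, Measurable f → (∃ C, ∀ y, |f y| ≤ C) → Measurable fun x => ∫ y, f y ∂P x) :
    Measurable P :=
  Measure.measurable_of_measurable_coe P fun s hs => by
    simpa only [integral_indicator_one hs, measureReal_def,
      ENNReal.ofReal_toReal (measure_ne_top _ _)] using
      (h _ (measurable_one.indicator hs) (exists_abs_indicator_one_le s)).ennreal_ofReal

lemma Measure.ext_of_integral_bounded {μ ν : Measure α} [IsFiniteMeasure μ] [IsFiniteMeasure ν]
    (h : ∀ g : α → ℝ, Measurable g → (∃ C, ∀ x, |g x| ≤ C) → ∫ x, g x ∂μ = ∫ x, g x ∂ν) :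
    μ = ν := by
  ext s hs
  have hind := h _ (measurable_one.indicator hs) (exists_abs_indicator_one_le s)
  rw [integral_indicator_one hs, integral_indicator_one hs] at hind
  rw [← ofReal_measureReal, hind, ofReal_measureReal]

lemma integrable_of_bounded {μ : Measure α} [IsFiniteMeasure μ] {f : α → ℝ} (hf : Measurable f)
    (hfb : ∃ C, ∀ x, |f x| ≤ C) : Integrable f μ :=
  let ⟨C, hC⟩ := hfb
  .of_bound hf.aestronglyMeasurable C (ae_of_all _ fun x => (Real.norm_eq_abs _).trans_le (hC x))

lemma abs_integral_le_of_abs_le {μ : Measure α} [IsProbabilityMeasure μ] {f : α → ℝ} {C : ℝ}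
    (hC : ∀ x, |f x| ≤ C) : |∫ x, f x ∂μ| ≤ C := by
  simpa using norm_integral_le_of_norm_le_const (μ := μ) (f := f) (ae_of_all _ hC)

lemma Measure.integral_comp_kernel {μ : Measure α} [SFinite μ] {κ : Kernel α β}
    [IsSFiniteKernel κ] {f : β → ℝ} (hf : Integrable f (κ ∘ₘ μ)) :
    ∫ y, f y ∂(κ ∘ₘ μ) = ∫ x, ∫ y, f y ∂κ x ∂μ := by
  rw [Measure.comp_eq_comp_const_apply] at hf ⊢
  rw [Kernel.integral_comp hf]
  simp

end MeasureTheory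

namespace Solenoid

variable {X : Type*} {r : X → X}

lemma iterate_coord_add (ω : Solenoid r) (n k : ℕ) : r^[k] (ω.1 (n + k)) = ω.1 n := by
  induction k with
  | zero => rfl
  | succ k ih => rw [Function.iterate_succ_apply, ← add_assoc, ω.2, ih]

variable [MeasurableSpace X]

lemma measurable_coord (n : ℕ) : Measurable fun ω : Solenoid r => ω.1 n :=
  (measurable_pi_apply n).comp measurable_subtype_coe

lemma measurable_shift : Measurable (solenoidShift r) :=
  (measurable_pi_lambda _ fun n => measurable_coord (n + 1)).subtype_mk

lemma iSup_comap_coord :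
    ⨆ n, MeasurableSpace.comap (fun ω : Solenoid r => ω.1 n) ‹_›
      = (inferInstance : MeasurableSpace (Solenoid r)) := by
  change _ = MeasurableSpace.comap Subtype.val MeasurableSpace.pi
  simp only [MeasurableSpace.pi, MeasurableSpace.comap_iSup, MeasurableSpace.comap_comp]
  rfl

lemma monotone_comap_coord (hr : Measurable r) :
    Monotone fun n => MeasurableSpace.comap (fun ω : Solenoid r => ω.1 n) ‹_› := by
  refine monotone_nat_of_le_succ fun n => ?_
  have h : (fun ω : Solenoid r => ω.1 n) = r ∘ fun ω => ω.1 (n + 1) := funext fun ω => (ω.2 n).symm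
  rw [h, ← MeasurableSpace.comap_comp]
  exact MeasurableSpace.comap_mono hr.comap_le

lemma measure_ext_of_map_coord (hr : Measurable r) {μ ν : Measure (Solenoid r)} [IsFiniteMeasure μ]
    (h : ∀ n, μ.map (fun ω => ω.1 n) = ν.map (fun ω => ω.1 n)) : μ = ν := by
  let m n : MeasurableSpace (Solenoid r) := .comap (fun ω => ω.1 n) ‹_›
  refine ext_of_generate_finite (⋃ n, {s | MeasurableSet[m n] s})
    (iSup_comap_coord.symm.trans (MeasurableSpace.generateFrom_iUnion_measurableSet m).symm)
    (isPiSystem_iUnion_of_monotone _ (fun n => @MeasurableSpace.isPiSystem_measurableSet _ (m n))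
      fun _ _ hab => monotone_comap_coord hr hab) ?_ ?_
  · simp only [Set.mem_iUnion]
    rintro _ ⟨n, B, hB, rfl⟩
    rw [← Measure.map_apply (measurable_coord n) hB, h, Measure.map_apply (measurable_coord n) hB]
  · simpa [Measure.map_apply (measurable_coord 0) MeasurableSet.univ] using
      congrArg (· Set.univ) (h 0)

end Solenoid

section QuasiInvariant

variable {X : Type*} [MeasurableSpace X] {r : X → X} {V : X → ℝ} {μhat : Measure (Solenoid r)}

lemma integral_comp_solenoidShift (hVm : Measurable V) (hVpos : ∀ x, 0 ≤ V x)
    (hquasi : μhat.map (solenoidShift r) = μhat.withDensity fun ω => ENNReal.ofReal (V (ω.1 0)))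
    {h : Solenoid r → ℝ} (hh : Measurable h) :
    ∫ ω, h (solenoidShift r ω) ∂μhat = ∫ ω, V (ω.1 0) * h ω ∂μhat := by
  have hdens : (fun ω : Solenoid r => ENNReal.ofReal (V (ω.1 0)))
      = fun ω => ((V (ω.1 0)).toNNReal : ENNReal) := rfl
  rw [← integral_map Solenoid.measurable_shift.aemeasurable hh.aestronglyMeasurable, hquasi, hdens,
    integral_withDensity_eq_integral_smul (f := fun ω : Solenoid r => (V (ω.1 0)).toNNReal)
      (hVm.comp (Solenoid.measurable_coord 0)).real_toNNReal]
  simp [NNReal.smul_def, Real.coe_toNNReal _ (hVpos _)]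

lemma integral_coord_eq_integral_prod_mul (hVm : Measurable V) (hVpos : ∀ x, 0 ≤ V x)
    (hquasi : μhat.map (solenoidShift r) = μhat.withDensity fun ω => ENNReal.ofReal (V (ω.1 0)))
    {μ₀ : Measure X} (hθ0 : μhat.map (fun ω => ω.1 0) = μ₀) (hr : Measurable r) (n : ℕ)
    {g : X → ℝ} (hg : Measurable g) :
    ∫ ω, g (ω.1 n) ∂μhat = ∫ x, (∏ j ∈ Finset.range n, V (r^[j] x)) * g x ∂μ₀ := by
  induction n generalizing g with
  | zero =>
    simp [← hθ0, integral_map (Solenoid.measurable_coord 0).aemeasurable hg.aestronglyMeasurable]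
  | succ n ih =>
    have hVn : Measurable fun x => V (r^[n] x) * g x := (hVm.comp (hr.iterate n)).mul hg
    calc ∫ ω, g (ω.1 (n + 1)) ∂μhat
        = ∫ ω, V (ω.1 0) * g (ω.1 n) ∂μhat :=
          integral_comp_solenoidShift hVm hVpos hquasi (hg.comp (Solenoid.measurable_coord n))
      _ = ∫ ω, V (r^[n] (ω.1 n)) * g (ω.1 n) ∂μhat := by
          simp only [← Solenoid.iterate_coord_add _ 0 n, zero_add]
      _ = ∫ x, (∏ j ∈ Finset.range (n + 1), V (r^[j] x)) * g x ∂μ₀ := by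
          simp only [ih hVn, Finset.prod_range_succ, mul_assoc]

end QuasiInvariant

section RuelleOperator

variable {X : Type*}

noncomputable def ruelleOperator (r : X → X) (Δ g : X → ℝ) (x : X) : ℝ :=
  ∑ᶠ y ∈ r ⁻¹' {x}, Δ y * g y

variable {r : X → X}

lemma ruelleOperator_mul_comp (Δ h g : X → ℝ) (x : X) :
    ruelleOperator r Δ (fun y => h (r y) * g y) x = h x * ruelleOperator r Δ g x := by
  rw [ruelleOperator, ruelleOperator, mul_finsum_mem]
  refine finsum_mem_congr rfl fun y hy => ?_
  rw [Set.mem_preimage, Set.mem_singleton_iff] at hy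
  rw [hy]
  ring

lemma preimage_iterate_succ_singleton (n : ℕ) (x : X) :
    r^[n + 1] ⁻¹' {x} = ⋃ z ∈ r ⁻¹' {x}, r^[n] ⁻¹' {z} := by
  ext y
  simp only [Set.mem_iUnion, Set.mem_preimage, Set.mem_singleton_iff, exists_prop,
    exists_eq_right', Function.iterate_succ_apply']

lemma finite_preimage_iterate_singleton (hfin : ∀ x, (r ⁻¹' {x}).Finite) (n : ℕ) (x : X) :
    (r^[n] ⁻¹' {x}).Finite := by
  induction n generalizing x with
  | zero => simp
  | succ n ih =>
    rw [preimage_iterate_succ_singleton]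
    exact (hfin x).biUnion fun z _ => ih z

lemma ruelleOperator_iterate_apply (hfin : ∀ x, (r ⁻¹' {x}).Finite) (Δ g : X → ℝ) (n : ℕ)
    (x : X) :
    (ruelleOperator r Δ)^[n] g x
      = ∑ᶠ y ∈ r^[n] ⁻¹' {x}, (∏ j ∈ Finset.range n, Δ (r^[j] y)) * g y := by
  induction n generalizing x with
  | zero => simp
  | succ n ih =>
    rw [Function.iterate_succ_apply', ruelleOperator, preimage_iterate_succ_singleton,
      finsum_mem_biUnion _ (hfin x) fun z _ => finite_preimage_iterate_singleton hfin n z]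
    · refine finsum_mem_congr rfl fun z hz => ?_
      rw [ih, mul_finsum_mem]
      refine finsum_mem_congr rfl fun y hy => ?_
      rw [Set.mem_preimage, Set.mem_singleton_iff] at hy
      rw [Finset.prod_range_succ, hy]
      ring
    · intro z₁ _ z₂ _ hne
      exact Set.disjoint_left.mpr fun y h₁ h₂ => hne (h₁.symm.trans h₂)

lemma exists_abs_prod_iterate_le {V : X → ℝ} (hVpos : ∀ x, 0 ≤ V x) (hVbdd : ∃ C, ∀ x, V x ≤ C)
    (n : ℕ) : ∃ C, ∀ x, |∏ j ∈ Finset.range n, V (r^[j] x)| ≤ C := by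
  obtain ⟨C, hC⟩ := hVbdd
  refine ⟨∏ _j ∈ Finset.range n, C, fun x => ?_⟩
  rw [Finset.abs_prod]
  exact Finset.prod_le_prod (fun _ _ => abs_nonneg _) fun j _ =>
    (abs_of_nonneg (hVpos _)).trans_le (hC _)

variable [MeasurableSpace X]

lemma integral_prod_mul_eq_integral_ruelleOperator_iterate {μ₀ : Measure X} {V Δ : X → ℝ}
    (hr : Measurable r) (hVm : Measurable V) (hVpos : ∀ x, 0 ≤ V x)
    (hVbdd : ∃ C, ∀ x, V x ≤ C)
    (hΔint : ∀ f : X → ℝ, Measurable f → (∃ C, ∀ x, |f x| ≤ C) →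
      ∫ x, V x * f x ∂μ₀ = ∫ x, ruelleOperator r Δ f x ∂μ₀)
    (hR : ∀ g : X → ℝ, Measurable g → (∃ C, ∀ x, |g x| ≤ C) →
      Measurable (ruelleOperator r Δ g) ∧ ∃ C, ∀ x, |ruelleOperator r Δ g x| ≤ C)
    (n : ℕ) {g : X → ℝ} (hg : Measurable g) (hgb : ∃ C, ∀ x, |g x| ≤ C) :
    ∫ x, (∏ j ∈ Finset.range n, V (r^[j] x)) * g x ∂μ₀
      = ∫ x, (ruelleOperator r Δ)^[n] g x ∂μ₀ := by
  induction n generalizing g with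
  | zero => simp
  | succ n ih =>
    set Vn : X → ℝ := fun x => ∏ j ∈ Finset.range n, V (r^[j] x)
    have hVnm : Measurable Vn := Finset.measurable_prod _ fun j _ => hVm.comp (hr.iterate j)
    obtain ⟨hRm, hRb⟩ := hR g hg hgb
    calc ∫ x, (∏ j ∈ Finset.range (n + 1), V (r^[j] x)) * g x ∂μ₀
        = ∫ x, V x * (Vn (r x) * g x) ∂μ₀ := by
          simp only [Vn, Finset.prod_range_succ', ← Function.iterate_succ_apply, mul_assoc,
            mul_left_comm (V _), Function.iterate_zero_apply]
      _ = ∫ x, Vn x * ruelleOperator r Δ g x ∂μ₀ := by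
          rw [hΔint (fun y => Vn (r y) * g y) ((hVnm.comp hr).mul hg) (exists_abs_mul_le
            (exists_abs_comp_le (exists_abs_prod_iterate_le hVpos hVbdd n) r) hgb)]
          simp only [ruelleOperator_mul_comp]
      _ = ∫ x, (ruelleOperator r Δ)^[n + 1] g x ∂μ₀ := ih hRm hRb

end RuelleOperator

lemma integral_coord_eq_ruelleOperator_iterate {X : Type*} [MeasurableSpace X] {r : X → X}
    {Δ : X → ℝ} {P : X → Measure (Solenoid r)} [∀ x, IsProbabilityMeasure (P x)]
    (hfin : ∀ x, (r ⁻¹' {x}).Finite) (hPsupp : ∀ x, P x {ω : Solenoid r | ω.1 0 ≠ x} = 0)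
    (hP : ∀ x₀ : X, ∀ n : ℕ, 1 ≤ n → ∀ g : X → ℝ, Measurable g → (∃ C, ∀ x, |g x| ≤ C) →
      ∫ ω, g (ω.1 n) ∂(P x₀)
        = ∑ᶠ y ∈ (r^[n]) ⁻¹' {x₀}, (∏ j ∈ Finset.range n, Δ (r^[j] y)) * g y)
    (n : ℕ) {g : X → ℝ} (hg : Measurable g) (hgb : ∃ C, ∀ x, |g x| ≤ C) (x : X) :
    ∫ ω, g (ω.1 n) ∂(P x) = (ruelleOperator r Δ)^[n] g x := by
  cases n with
  | zero =>
    have hcoord : ∀ᵐ ω ∂(P x), ω.1 0 = x := ae_iff.mpr (hPsupp x)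
    simp [integral_congr_ae (hcoord.mono fun ω hω => congrArg g hω)]
  | succ n => rw [hP x (n + 1) n.succ_pos g hg hgb, ruelleOperator_iterate_apply hfin]

theorem stmt17_general {X : Type*} [MeasurableSpace X] (r : X → X) (hr : Measurable r)
    (hfin : ∀ x, (r ⁻¹' {x}).Finite)
    (V : X → ℝ) (hVm : Measurable V) (hVpos : ∀ x, 0 ≤ V x) (hVbdd : ∃ C, ∀ x, V x ≤ C)
    (μ₀ : Measure X) [IsFiniteMeasure μ₀]
    (Δ : X → ℝ)
    (hΔint : ∀ f : X → ℝ, Measurable f → (∃ C, ∀ x, |f x| ≤ C) →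
      ∫ x, V x * f x ∂μ₀ = ∫ x, ∑ᶠ y ∈ r ⁻¹' {x}, Δ y * f y ∂μ₀)
    (μhat : Measure (Solenoid r)) [IsFiniteMeasure μhat]
    (hquasi : Measure.map (solenoidShift r) μhat
      = μhat.withDensity fun ω => ENNReal.ofReal (V (ω.1 0)))
    (hθ0 : Measure.map (fun ω : Solenoid r => ω.1 0) μhat = μ₀)
    (P : X → Measure (Solenoid r)) [∀ x, IsProbabilityMeasure (P x)]
    (hPsupp : ∀ x, P x {ω : Solenoid r | ω.1 0 ≠ x} = 0)
    (hPmeas : ∀ f : Solenoid r → ℝ, Measurable f → (∃ C, ∀ ω, |f ω| ≤ C) →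
      Measurable fun x => ∫ ω, f ω ∂(P x))
    (hP : ∀ x₀ : X, ∀ n : ℕ, 1 ≤ n → ∀ g : X → ℝ, Measurable g → (∃ C, ∀ x, |g x| ≤ C) →
      ∫ ω, g (ω.1 n) ∂(P x₀)
        = ∑ᶠ y ∈ (r^[n]) ⁻¹' {x₀}, (∏ j ∈ Finset.range n, Δ (r^[j] y)) * g y) :
    ∀ f : Solenoid r → ℝ, Measurable f → (∃ C, ∀ ω, |f ω| ≤ C) →
      ∫ ω, f ω ∂μhat = ∫ x₀, (∫ ω, f ω ∂(P x₀)) ∂μ₀ := by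
  have hPR := integral_coord_eq_ruelleOperator_iterate hfin hPsupp hP
  have hR : ∀ g : X → ℝ, Measurable g → (∃ C, ∀ x, |g x| ≤ C) →
      Measurable (ruelleOperator r Δ g) ∧ ∃ C, ∀ x, |ruelleOperator r Δ g x| ≤ C := by
    rintro g hg ⟨C, hC⟩
    have hR1 : ruelleOperator r Δ g = fun x => ∫ ω, g (ω.1 1) ∂(P x) :=
      funext fun x => (hPR 1 hg ⟨C, hC⟩ x).symm
    rw [hR1]
    exact ⟨hPmeas _ (hg.comp (Solenoid.measurable_coord 1)) ⟨C, fun ω => hC _⟩,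
      C, fun x => abs_integral_le_of_abs_le fun ω => hC _⟩
  let κ : Kernel X (Solenoid r) := ⟨P, Measure.measurable_of_measurable_integral hPmeas⟩
  have : IsMarkovKernel κ := ⟨‹_›⟩
  have hμhat : μhat = κ ∘ₘ μ₀ := by
    refine Solenoid.measure_ext_of_map_coord hr fun n =>
      Measure.ext_of_integral_bounded fun g hg hgb => ?_
    have hgn : Measurable fun ω : Solenoid r => g (ω.1 n) := hg.comp (Solenoid.measurable_coord n)
    rw [integral_map (Solenoid.measurable_coord n).aemeasurable hg.aestronglyMeasurable,
      integral_map (Solenoid.measurable_coord n).aemeasurable hg.aestronglyMeasurable,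
      integral_coord_eq_integral_prod_mul hVm hVpos hquasi hθ0 hr n hg,
      integral_prod_mul_eq_integral_ruelleOperator_iterate hr hVm hVpos hVbdd hΔint hR n hg hgb,
      Measure.integral_comp_kernel
        (integrable_of_bounded hgn (exists_abs_comp_le hgb _))]
    exact integral_congr_ae (ae_of_all _ fun x => (hPR n hg hgb x).symm)
  intro f hf hfb
  rw [hμhat, Measure.integral_comp_kernel (integrable_of_bounded hf hfb)]
  rfl

/-- Disintegration, Theorem 3.4: let μ₀ have the fixed-point property with
associated function Δ, let μ̂ be the V-quasi-invariant measure on X_∞(r) with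
μ̂ ∘ θ₀⁻¹ = μ₀, and for each x₀ let P x₀ be the path measure of Proposition 2.3
(supported on {ω : θ₀ ω = x₀}, with marginals given by the Δ⁽ⁿ⁾-sums). Then
∫ f dμ̂ = ∫_X ∫_{Ω_{x₀}} f(x₀,ω) dP_{x₀}(ω) dμ₀(x₀) for all bounded measurable f. -/
theorem stmt17 {X : Type*} [MeasurableSpace X] (r : X → X) (hr : Measurable r)
    (hsurj : Function.Surjective r) (hfin : ∀ x, (r ⁻¹' {x}).Finite)
    (V : X → ℝ) (hVm : Measurable V) (hVpos : ∀ x, 0 ≤ V x) (hVbdd : ∃ C, ∀ x, V x ≤ C)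
    (μ₀ : Measure X) [IsFiniteMeasure μ₀]
    (hfp : ∀ f : X → ℝ, Measurable f → (∃ C, ∀ x, |f x| ≤ C) →
      ∫ x, V x * f (r x) ∂μ₀ = ∫ x, f x ∂μ₀)
    (Δ : X → ℝ) (hΔm : Measurable Δ) (hΔpos : ∀ x, 0 ≤ Δ x)
    (hΔ1 : ∀ᵐ x ∂μ₀, ∑ᶠ y ∈ r ⁻¹' {x}, Δ y = 1)
    (hΔint : ∀ f : X → ℝ, Measurable f → (∃ C, ∀ x, |f x| ≤ C) →
      ∫ x, V x * f x ∂μ₀ = ∫ x, ∑ᶠ y ∈ r ⁻¹' {x}, Δ y * f y ∂μ₀)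
    (μhat : Measure (Solenoid r)) [IsFiniteMeasure μhat]
    (hquasi : Measure.map (solenoidShift r) μhat
      = μhat.withDensity fun ω => ENNReal.ofReal (V (ω.1 0)))
    (hθ0 : Measure.map (fun ω : Solenoid r => ω.1 0) μhat = μ₀)
    (P : X → Measure (Solenoid r)) [∀ x, IsProbabilityMeasure (P x)]
    (hPsupp : ∀ x, P x {ω : Solenoid r | ω.1 0 ≠ x} = 0)
    (hPmeas : ∀ f : Solenoid r → ℝ, Measurable f → (∃ C, ∀ ω, |f ω| ≤ C) →
      Measurable fun x => ∫ ω, f ω ∂(P x))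
    (hP : ∀ x₀ : X, ∀ n : ℕ, 1 ≤ n → ∀ g : X → ℝ, Measurable g → (∃ C, ∀ x, |g x| ≤ C) →
      ∫ ω, g (ω.1 n) ∂(P x₀)
        = ∑ᶠ y ∈ (r^[n]) ⁻¹' {x₀}, (∏ j ∈ Finset.range n, Δ (r^[j] y)) * g y) :
    ∀ f : Solenoid r → ℝ, Measurable f → (∃ C, ∀ ω, |f ω| ≤ C) →
      ∫ ω, f ω ∂μhat = ∫ x₀, (∫ ω, f ω ∂(P x₀)) ∂μ₀ :=
  stmt17_general r hr hfin V hVm hVpos hVbdd μ₀ Δ hΔint μhat hquasi hθ0 P hPsupp hPmeas hP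
end

section
/- (Pushforward marginals) Let μ̂ be a V-quasi-invariant measure on X_∞(r) and μ_n := μ̂ ∘ θ_n⁻¹, μ₀ := μ̂ ∘ θ₀⁻¹. Then dμ_n = V^{(n)} dμ₀, i.e. ∫ g dμ_n = ∫ V^{(n)}·g dμ₀ for all bounded measurable g, where V^{(n)} := V·(V∘r)⋯(V∘r^{n-1}). -/
open MeasureTheory

lemma measurable_theta {X : Type*} [MeasurableSpace X] (r : X → X) (n : ℕ) :
    Measurable (fun ω : Solenoid r => ω.1 n) :=
  (measurable_pi_apply n).comp measurable_subtype_coe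

lemma measurable_shift {X : Type*} [MeasurableSpace X] (r : X → X) :
    Measurable (solenoidShift r) := by
  apply Measurable.subtype_mk
  exact measurable_pi_lambda _ fun n => measurable_theta r (n + 1)

lemma shift_iterate_zero {X : Type*} (r : X → X) :
    ∀ n (ω : Solenoid r), ((solenoidShift r)^[n] ω).1 0 = ω.1 n := by
  intro n
  induction n with
  | zero => intro ω; rfl
  | succ n ih =>
    intro ω
    rw [Function.iterate_succ_apply, ih (solenoidShift r ω)]
    rfl

/-- One-step change of variables. -/
lemma step_lemma {X : Type*} [MeasurableSpace X] (r : X → X)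
    (V : X → ℝ) (hVm : Measurable V) (hVpos : ∀ x, 0 ≤ V x)
    (μhat : Measure (Solenoid r))
    (hquasi : Measure.map (solenoidShift r) μhat
      = μhat.withDensity fun ω => ENNReal.ofReal (V (ω.1 0)))
    (F : Solenoid r → ℝ) (hF : Measurable F) :
    ∫ ω, F (solenoidShift r ω) ∂μhat = ∫ ω, V (ω.1 0) * F ω ∂μhat := by
  have h1 : ∫ ω, F (solenoidShift r ω) ∂μhat
      = ∫ ω, F ω ∂(Measure.map (solenoidShift r) μhat) :=
    (integral_map (measurable_shift r).aemeasurable hF.aestronglyMeasurable).symm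
  rw [h1, hquasi]
  have h2 : (fun ω : Solenoid r => ENNReal.ofReal (V (ω.1 0)))
      = fun ω : Solenoid r => ((V (ω.1 0)).toNNReal : ENNReal) := rfl
  have fmeas : Measurable fun ω : Solenoid r => (V (ω.1 0)).toNNReal :=
    measurable_real_toNNReal.comp (hVm.comp (measurable_theta r 0))
  rw [h2, integral_withDensity_eq_integral_smul fmeas F]
  congr 1
  ext ω
  rw [NNReal.smul_def, Real.coe_toNNReal _ (hVpos _), smul_eq_mul]

lemma key_lemma {X : Type*} [MeasurableSpace X] (r : X → X) (hr : Measurable r)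
    (V : X → ℝ) (hVm : Measurable V) (hVpos : ∀ x, 0 ≤ V x)
    (μhat : Measure (Solenoid r))
    (hquasi : Measure.map (solenoidShift r) μhat
      = μhat.withDensity fun ω => ENNReal.ofReal (V (ω.1 0))) :
    ∀ n : ℕ, ∀ F : Solenoid r → ℝ, Measurable F →
      ∫ ω, F ((solenoidShift r)^[n] ω) ∂μhat
        = ∫ ω, (∏ j ∈ Finset.range n, V (r^[j] (ω.1 0))) * F ω ∂μhat := by
  intro n
  induction n with
  | zero => intro F hF; simp
  | succ n ih =>
    intro F hF
    have hstep : ∀ ω : Solenoid r, F ((solenoidShift r)^[n+1] ω)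
        = (F ∘ solenoidShift r) ((solenoidShift r)^[n] ω) := by
      intro ω; rw [Function.iterate_succ_apply' ]; rfl
    simp only [hstep]
    rw [ih (F ∘ solenoidShift r) (hF.comp (measurable_shift r))]
    -- now rewrite ∏_{j<n} V (r^[j] ω₀) * F (shift ω) as H (shift ω)
    set H : Solenoid r → ℝ :=
      fun ω => (∏ j ∈ Finset.range n, V (r^[j+1] (ω.1 0))) * F ω with hHdef
    have hHmeas : Measurable H := by
      apply Measurable.mul _ hF
      exact Finset.measurable_prod _ fun j _ =>
        hVm.comp ((hr.iterate (j+1)).comp (measurable_theta r 0))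
    have hHeq : ∀ ω : Solenoid r,
        (∏ j ∈ Finset.range n, V (r^[j] (ω.1 0))) * (F ∘ solenoidShift r) ω
          = H (solenoidShift r ω) := by
      intro ω
      simp only [hHdef, Function.comp]
      congr 1
      apply Finset.prod_congr rfl
      intro j _
      have : r ((solenoidShift r ω).1 0) = ω.1 0 := ω.2 0
      rw [show ∀ y, r^[j+1] y = r^[j] (r y) from fun y => Function.iterate_succ_apply r j y,
        this]
    simp only [hHeq]
    rw [step_lemma r V hVm hVpos μhat hquasi H hHmeas]
    congr 1
    ext ω
    simp only [hHdef]
    rw [Finset.prod_range_succ' (fun j => V (r^[j] (ω.1 0))) n]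
    simp only [Function.iterate_zero, id]
    ring

/-- Pushforward marginals: if μ̂ is V-quasi-invariant on X_∞(r), then the
marginals μ_n := μ̂ ∘ θ_n⁻¹ satisfy dμ_n = V⁽ⁿ⁾ dμ₀ with μ₀ := μ̂ ∘ θ₀⁻¹ and
V⁽ⁿ⁾ = V·(V∘r)⋯(V∘r^{n-1}). -/
theorem stmt18 {X : Type*} [MeasurableSpace X] (r : X → X) (hr : Measurable r)
    (hsurj : Function.Surjective r) (hfin : ∀ x, (r ⁻¹' {x}).Finite)
    (V : X → ℝ) (hVm : Measurable V) (hVpos : ∀ x, 0 ≤ V x) (hVbdd : ∃ C, ∀ x, V x ≤ C)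
    (μhat : Measure (Solenoid r)) [IsFiniteMeasure μhat]
    (hquasi : Measure.map (solenoidShift r) μhat
      = μhat.withDensity fun ω => ENNReal.ofReal (V (ω.1 0))) :
    ∀ n : ℕ, ∀ g : X → ℝ, Measurable g → (∃ C, ∀ x, |g x| ≤ C) →
      ∫ x, g x ∂(Measure.map (fun ω : Solenoid r => ω.1 n) μhat)
        = ∫ x, (∏ j ∈ Finset.range n, V (r^[j] x)) * g x
            ∂(Measure.map (fun ω : Solenoid r => ω.1 0) μhat) := by
  intro n g hg _
  rw [integral_map (measurable_theta r n).aemeasurable hg.aestronglyMeasurable,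
    integral_map (measurable_theta r 0).aemeasurable]
  · have h1 : ∀ ω : Solenoid r, g (ω.1 n) = (fun ω : Solenoid r => g (ω.1 0))
        ((solenoidShift r)^[n] ω) := by
      intro ω; simp [shift_iterate_zero r n ω]
    simp only [h1]
    exact key_lemma r hr V hVm hVpos μhat hquasi n _ (hg.comp (measurable_theta r 0))
  · exact ((Finset.measurable_prod _ fun j _ => hVm.comp (hr.iterate j)).mul
      hg).aestronglyMeasurable
end
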